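/- arXiv:2212.05444 — 9 statements merged into one kernel-verified Lean document; each statement's English description precedes it below -/
import Mathlib

section
/- Let k be a field, Q = k[x₁,...,xₙ], and I a homogeneous Gorenstein ideal with (x₁,...,xₙ)⁴ ⊆ I ⊆ (x₁,...,xₙ)². If the class of x₁ in Q/I has rank one and x₁² ∉ I, then after a linear change of variables x₁x₂,...,x₁xₙ ∈ I and the dual generator of I has the form F = X₁^{[3]} + G(X₂,...,Xₙ) for some cubic form G. -/
/-!
Since `x₁² ∉ I` and the image of multiplication by `x₁` on `(Q/I)₁` is one-dimensional, it is
spanned by `x₁²`, so `x₁xⱼ ≡ cⱼx₁² (mod I)`. The substitution `xⱼ ↦ xⱼ + cⱼx₁` carries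
`x₁xⱼ - cⱼx₁²` to `x₁xⱼ` and transports `F` to a cubic `F'` (dual to it under the apolarity
pairing) annihilated by every `x₁xⱼ`, `j ≠ 1`: no monomial of `F'` involves `X₁` together with
another variable. Hence `F' = a X₁^{[3]} + G(X₂, …, Xₙ)`, with `a ≠ 0` since `x₁²` does not
annihilate `F'`, and `a⁻¹F'` has the same annihilator.
-/

open MvPolynomial

/-- Contraction action of the polynomial ring on the divided power algebra,
recorded in divided power coordinates: `x^s ∘ X^{[t]} = X^{[t−s]}` if `s ≤ t`,
and `0` otherwise, extended bilinearly. -/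
noncomputable def contract {σ : Type*} {k : Type*} [CommSemiring k]
    (q F : MvPolynomial σ k) : MvPolynomial σ k :=
  letI := Classical.decEq σ
  letI : DecidablePred fun p : (σ →₀ ℕ) × (σ →₀ ℕ) => p.1 ≤ p.2 := fun _ => Classical.dec _
  ∑ s ∈ q.support, ∑ t ∈ F.support,
    if s ≤ t then MvPolynomial.monomial (t - s) (q.coeff s * F.coeff t) else 0

section Contraction

variable {σ k : Type*} [CommSemiring k]

theorem coeff_contract (q F : MvPolynomial σ k) (u : σ →₀ ℕ) :
    coeff u (contract q F) = ∑ s ∈ q.support, coeff s q * coeff (s + u) F := by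
  classical
  simp only [contract, coeff_sum]
  refine Finset.sum_congr rfl fun s _ => ?_
  rw [Finset.sum_eq_single (s + u)]
  · simp
  · intro t _ ht
    split_ifs with hst
    · rw [coeff_monomial, if_neg]
      rintro rfl
      exact ht (add_tsub_cancel_of_le hst).symm
    · rfl
  · intro h
    simp [notMem_support_iff.mp h]

theorem coeff_contract_of_support_subset {q : MvPolynomial σ k} {S : Finset (σ →₀ ℕ)}
    (hS : q.support ⊆ S) (F : MvPolynomial σ k) (u : σ →₀ ℕ) :
    coeff u (contract q F) = ∑ s ∈ S, coeff s q * coeff (s + u) F := by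
  rw [coeff_contract]
  exact Finset.sum_subset hS fun s _ hs => by rw [notMem_support_iff.mp hs, zero_mul]

theorem coeff_contract_monomial (w : σ →₀ ℕ) (c : k) (F : MvPolynomial σ k) (u : σ →₀ ℕ) :
    coeff u (contract (monomial w c) F) = c * coeff (w + u) F := by
  classical
  rw [coeff_contract_of_support_subset support_monomial_subset, Finset.sum_singleton,
    coeff_monomial, if_pos rfl]

theorem contract_add_left (a b F : MvPolynomial σ k) :
    contract (a + b) F = contract a F + contract b F := by
  classical
  ext u
  rw [coeff_add, coeff_contract_of_support_subset support_add,
    coeff_contract_of_support_subset Finset.subset_union_left,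
    coeff_contract_of_support_subset Finset.subset_union_right, ← Finset.sum_add_distrib]
  simp only [coeff_add, add_mul]

theorem contract_smul_left (c : k) (q F : MvPolynomial σ k) :
    contract (c • q) F = c • contract q F := by
  ext u
  simp only [coeff_smul, coeff_contract_of_support_subset support_smul, coeff_contract,
    smul_eq_mul, Finset.mul_sum, mul_assoc]

theorem contract_add_right (q a b : MvPolynomial σ k) :
    contract q (a + b) = contract q a + contract q b := by
  ext u
  simp only [coeff_add, coeff_contract, ← Finset.sum_add_distrib, mul_add]

theorem contract_smul_right (c : k) (q F : MvPolynomial σ k) :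
    contract q (c • F) = c • contract q F := by
  ext u
  simp only [coeff_smul, coeff_contract, smul_eq_mul, Finset.mul_sum, mul_left_comm]

theorem contract_zero_right (q : MvPolynomial σ k) : contract q (0 : MvPolynomial σ k) = 0 := by
  simpa using contract_smul_right 0 q 0

theorem contract_mul (p q F : MvPolynomial σ k) :
    contract (p * q) F = contract p (contract q F) := by
  induction p using MvPolynomial.induction_on' with
  | add a b ha hb => rw [add_mul, contract_add_left, contract_add_left, ha, hb]
  | monomial w c =>
    induction q using MvPolynomial.induction_on' with
    | add a b ha hb =>
      rw [mul_add, contract_add_left, ha, hb, contract_add_left, contract_add_right]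
    | monomial w' c' =>
      ext u
      rw [monomial_mul, coeff_contract_monomial, coeff_contract_monomial,
        coeff_contract_monomial, add_assoc, add_left_comm w, mul_assoc]

theorem coeff_eq_zero_of_contract_monomial_eq_zero {w : σ →₀ ℕ} {F : MvPolynomial σ k}
    (h : contract (monomial w 1) F = 0) {m : σ →₀ ℕ} (hwm : w ≤ m) : coeff m F = 0 := by
  simpa [coeff_contract_monomial, add_tsub_cancel_of_le hwm] using
    congrArg (coeff (m - w)) h

end Contraction

section Pairing

variable {σ k : Type*} [CommSemiring k]

noncomputable def apolarPairing (q F : MvPolynomial σ k) : k := coeff 0 (contract q F)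

theorem apolarPairing_add_left (a b F : MvPolynomial σ k) :
    apolarPairing (a + b) F = apolarPairing a F + apolarPairing b F := by
  rw [apolarPairing, contract_add_left, coeff_add, apolarPairing, apolarPairing]

theorem apolarPairing_smul_left (c : k) (q F : MvPolynomial σ k) :
    apolarPairing (c • q) F = c * apolarPairing q F := by
  rw [apolarPairing, contract_smul_left, coeff_smul, smul_eq_mul, apolarPairing]

theorem apolarPairing_monomial (s : σ →₀ ℕ) (c : k) (F : MvPolynomial σ k) :
    apolarPairing (monomial s c) F = c * coeff s F := by
  rw [apolarPairing, coeff_contract_monomial, add_zero]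

theorem apolarPairing_eq_zero_of_isHomogeneous {g F : MvPolynomial σ k} {m d : ℕ}
    (hg : g.IsHomogeneous m) (hF : F.IsHomogeneous d) (hmd : m ≠ d) :
    apolarPairing g F = 0 := by
  rw [apolarPairing, coeff_contract]
  refine Finset.sum_eq_zero fun s hs => ?_
  rw [add_zero, hF.coeff_eq_zero, mul_zero]
  rw [Finsupp.degree_eq_weight_one]
  exact fun hd => hmd ((hg (mem_support_iff.mp hs)).symm.trans hd)

theorem contract_eq_zero_iff_forall_apolarPairing (q F : MvPolynomial σ k) :
    contract q F = 0 ↔ ∀ p, apolarPairing (p * q) F = 0 := by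
  refine ⟨fun h p => by rw [apolarPairing, contract_mul, h, contract_zero_right, coeff_zero],
    fun h => ?_⟩
  ext u
  simpa [apolarPairing, contract_mul, coeff_contract_monomial] using h (monomial u 1)

end Pairing

theorem MvPolynomial.IsHomogeneous.algHom_apply {σ k : Type*} [CommSemiring k]
    {φ : MvPolynomial σ k →ₐ[k] MvPolynomial σ k} (hφ : ∀ i, (φ (X i)).IsHomogeneous 1)
    {p : MvPolynomial σ k} {m : ℕ} (hp : p.IsHomogeneous m) : (φ p).IsHomogeneous m := by
  rw [aeval_unique φ]
  simpa only [one_mul] using hp.aeval (φ ∘ X) hφ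

section PullbackDual

variable {σ k : Type*} [Fintype σ] [DecidableEq σ] [CommSemiring k]

theorem mem_finsuppAntidiag_univ_iff {d : ℕ} {t : σ →₀ ℕ} :
    t ∈ Finset.finsuppAntidiag Finset.univ d ↔ t.degree = d := by
  simp [Finsupp.degree_eq_sum]

noncomputable def pullbackDual (φ : MvPolynomial σ k →ₐ[k] MvPolynomial σ k) (d : ℕ)
    (F : MvPolynomial σ k) : MvPolynomial σ k :=
  ∑ t ∈ Finset.finsuppAntidiag Finset.univ d, monomial t (apolarPairing (φ (monomial t 1)) F)

variable (φ : MvPolynomial σ k →ₐ[k] MvPolynomial σ k) (d : ℕ) (F : MvPolynomial σ k)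

theorem coeff_pullbackDual (s : σ →₀ ℕ) :
    coeff s (pullbackDual φ d F) =
      if s.degree = d then apolarPairing (φ (monomial s 1)) F else 0 := by
  simp only [pullbackDual, coeff_sum, coeff_monomial, Finset.sum_ite_eq',
    mem_finsuppAntidiag_univ_iff]

theorem isHomogeneous_pullbackDual : (pullbackDual φ d F).IsHomogeneous d :=
  IsHomogeneous.sum _ _ _ fun _ ht =>
    isHomogeneous_monomial _ (mem_finsuppAntidiag_univ_iff.mp ht)

theorem apolarPairing_pullbackDual (hφ : ∀ i, (φ (X i)).IsHomogeneous 1) {F : MvPolynomial σ k}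
    (hF : F.IsHomogeneous d) (q : MvPolynomial σ k) :
    apolarPairing q (pullbackDual φ d F) = apolarPairing (φ q) F := by
  induction q using MvPolynomial.induction_on' with
  | add a b ha hb => rw [apolarPairing_add_left, map_add, apolarPairing_add_left, ha, hb]
  | monomial s c =>
    have hsc : (monomial s c : MvPolynomial σ k) = c • monomial s 1 := by
      rw [smul_monomial, smul_eq_mul, mul_one]
    rw [apolarPairing_monomial, coeff_pullbackDual, hsc, map_smul, apolarPairing_smul_left]
    split_ifs with hs
    · rfl
    · rw [apolarPairing_eq_zero_of_isHomogeneous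
        ((isHomogeneous_monomial _ rfl).algHom_apply hφ) hF hs]

end PullbackDual

theorem mem_map_algEquiv_iff {R A : Type*} [CommSemiring R] [Semiring A] [Algebra R A]
    (ψ : A ≃ₐ[R] A) {I : Ideal A} {q : A} : q ∈ I.map ψ ↔ ψ.symm q ∈ I :=
  Ideal.symm_apply_mem_of_equiv_iff (f := ψ.toRingEquiv) |>.symm

theorem mem_map_iff_contract_pullbackDual_eq_zero {σ k : Type*} [Fintype σ] [DecidableEq σ]
    [CommSemiring k] {I : Ideal (MvPolynomial σ k)} {F : MvPolynomial σ k} {d : ℕ}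
    (hF : F.IsHomogeneous d) (hann : ∀ q, q ∈ I ↔ contract q F = 0)
    (ψ : MvPolynomial σ k ≃ₐ[k] MvPolynomial σ k) (hψ : ∀ i, (ψ.symm (X i)).IsHomogeneous 1)
    (q : MvPolynomial σ k) :
    q ∈ I.map ψ ↔ contract q (pullbackDual (ψ.symm : MvPolynomial σ k →ₐ[k] _) d F) = 0 := by
  rw [mem_map_algEquiv_iff, hann, contract_eq_zero_iff_forall_apolarPairing,
    contract_eq_zero_iff_forall_apolarPairing, ψ.symm.surjective.forall]
  simp only [apolarPairing_pullbackDual (ψ.symm : MvPolynomial σ k →ₐ[k] _) d hψ hF,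
    AlgEquiv.coe_toAlgHom, map_mul]

section Shear

variable {σ k : Type*} [CommRing k] (e : σ) (c : σ → k) (hc : c e = 0)

noncomputable def shear : MvPolynomial σ k ≃ₐ[k] MvPolynomial σ k :=
  AlgEquiv.ofAlgHom (aeval fun i => X i + C (c i) * X e) (aeval fun i => X i - C (c i) * X e)
    (algHom_ext fun i => by simp [hc]) (algHom_ext fun i => by simp [hc])

theorem shear_X (i : σ) : shear e c hc (X i) = X i + C (c i) * X e :=
  aeval_X _ i

theorem shear_symm_X (i : σ) : (shear e c hc).symm (X i) = X i - C (c i) * X e :=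
  aeval_X _ i

theorem isHomogeneous_shear_X (i : σ) : (shear e c hc (X i)).IsHomogeneous 1 := by
  rw [shear_X]
  exact (isHomogeneous_X k i).add ((isHomogeneous_X k e).C_mul (c i))

theorem isHomogeneous_shear_symm_X (i : σ) : ((shear e c hc).symm (X i)).IsHomogeneous 1 := by
  rw [shear_symm_X]
  exact (isHomogeneous_X k i).sub ((isHomogeneous_X k e).C_mul (c i))

theorem shear_X_mul_X_sub (j : σ) :
    shear e c hc (X e * X j - C (c j) * X e ^ 2) = X e * X j := by
  have hCj : shear e c hc (C (c j)) = C (c j) := (shear e c hc).commutes (c j)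
  simp only [map_sub, map_mul, map_pow, hCj, shear_X, hc, map_zero, zero_mul, add_zero]
  ring

end Shear

theorem exists_eq_smul_of_finrank_range_eq_one {K V W : Type*} [DivisionRing K] [AddCommGroup V]
    [Module K V] [AddCommGroup W] [Module K W] {L : V →ₗ[K] W}
    (h : Module.finrank K (LinearMap.range L) = 1) {v : V} (hv : L v ≠ 0) (w : V) :
    ∃ c : K, L w = c • L v := by
  obtain ⟨c, hc⟩ := (finrank_eq_one_iff_of_nonzero' (⟨L v, v, rfl⟩ : LinearMap.range L)
    fun h0 => hv (congrArg Subtype.val h0)).mp h ⟨L w, w, rfl⟩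
  exact ⟨c, (congrArg Subtype.val hc).symm⟩

theorem exists_X_mul_X_sub_mem_of_finrank_eq_one {σ k : Type*} [Fintype σ] [DecidableEq σ]
    [Field k] {I : Ideal (MvPolynomial σ k)} {e : σ}
    (hrank : Module.finrank k
      (LinearMap.range
        ((Ideal.Quotient.mkₐ k I).toLinearMap ∘ₗ
          LinearMap.mulLeft k (X e) ∘ₗ
          (∑ i : σ, (LinearMap.proj i : (σ → k) →ₗ[k] k).smulRight (X i)))) = 1)
    (he : X e ^ 2 ∉ I) :
    ∃ c : σ → k, c e = 0 ∧ ∀ j ≠ e, X e * X j - C (c j) * X e ^ 2 ∈ I := by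
  set L := (Ideal.Quotient.mkₐ k I).toLinearMap ∘ₗ LinearMap.mulLeft k (X e) ∘ₗ
    (∑ i : σ, (LinearMap.proj i : (σ → k) →ₗ[k] k).smulRight (X i))
  have hL : ∀ j, L (Pi.single j 1) = Ideal.Quotient.mkₐ k I (X e * X j) := fun j => by
    simp [L, Pi.single_apply]
  have hLe : L (Pi.single e 1) ≠ 0 := by
    rwa [hL, ← sq, Ne, Ideal.Quotient.mkₐ_eq_mk, Ideal.Quotient.eq_zero_iff_mem]
  have hc : ∀ j, ∃ c : k, X e * X j - C c * X e ^ 2 ∈ I := fun j => by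
    obtain ⟨c, hc⟩ := exists_eq_smul_of_finrank_range_eq_one hrank hLe (Pi.single j 1)
    refine ⟨c, Ideal.Quotient.eq.mp ?_⟩
    rw [← Ideal.Quotient.mkₐ_eq_mk k, ← hL, hc, hL, ← map_smul, sq, smul_eq_C_mul]
  choose c hc using hc
  exact ⟨Function.update c e 0, Function.update_self .., fun j hj => by
    simpa [Function.update_of_ne hj] using hc j⟩

section NormalForm

variable {σ k : Type*} {e : σ} {d : ℕ}

theorem eq_single_or_apply_eq_zero_of_mem_support [CommSemiring k] {F : MvPolynomial σ k}
    (hF : F.IsHomogeneous d) (hann : ∀ j ≠ e, contract (X e * X j) F = 0)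
    {m : σ →₀ ℕ} (hm : m ∈ F.support) : m = Finsupp.single e d ∨ m e = 0 := by
  classical
  refine or_iff_not_imp_right.mpr fun hme => ?_
  have hsupp : m.support ⊆ {e} := by
    intro j hj
    by_contra hje
    have hje : j ≠ e := by simpa using hje
    refine mem_support_iff.mp hm (coeff_eq_zero_of_contract_monomial_eq_zero
      (w := Finsupp.single e 1 + Finsupp.single j 1) ?_ ?_)
    · rw [← hann j hje, X, X, monomial_mul, one_mul]
    · have hmj : m j ≠ 0 := Finsupp.mem_support_iff.mp hj
      intro i
      simp only [Finsupp.add_apply, Finsupp.single_apply]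
      split_ifs <;> subst_vars <;> first | omega | exact absurd rfl hje
  have hdeg : m.degree = d :=
    (Finsupp.degree_apply m).trans (hF.degree_eq_sum_deg_support hm).symm
  rw [Finsupp.support_subset_singleton.mp hsupp, Finsupp.degree_single] at hdeg
  rw [Finsupp.support_subset_singleton.mp hsupp, hdeg]

theorem coeff_single_ne_zero_of_contract_ne_zero [CommSemiring k] {F : MvPolynomial σ k}
    (hF : F.IsHomogeneous d) (hann : ∀ j ≠ e, contract (X e * X j) F = 0)
    {w : σ →₀ ℕ} (hw : w e ≠ 0) (hwF : contract (monomial w 1) F ≠ 0) :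
    coeff (Finsupp.single e d) F ≠ 0 := by
  obtain ⟨u, hu⟩ := ne_zero_iff.mp hwF
  rw [coeff_contract_monomial, one_mul] at hu
  rcases eq_single_or_apply_eq_zero_of_mem_support hF hann (mem_support_iff.mpr hu) with h | h
  · rwa [h] at hu
  · exact absurd (Nat.eq_zero_of_add_eq_zero_right h) hw

theorem exists_contract_eq_zero_iff_monomial_add [Field k] {F : MvPolynomial σ k}
    (hF : F.IsHomogeneous d) (hann : ∀ j ≠ e, contract (X e * X j) F = 0)
    (ha : coeff (Finsupp.single e d) F ≠ 0) :
    ∃ G : MvPolynomial σ k, G.IsHomogeneous d ∧ (∀ m ∈ G.support, m e = 0) ∧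
      ∀ q, contract q F = 0 ↔ contract q (monomial (Finsupp.single e d) 1 + G) = 0 := by
  classical
  set a := coeff (Finsupp.single e d) F
  refine ⟨C a⁻¹ * F - monomial (Finsupp.single e d) 1,
    (hF.C_mul _).sub (isHomogeneous_monomial _ (Finsupp.degree_single e d)), fun m hm => ?_,
    fun q => ?_⟩
  · have hm' := mem_support_iff.mp hm
    rw [coeff_sub, coeff_C_mul, coeff_monomial] at hm'
    by_cases hms : Finsupp.single e d = m
    · rw [if_pos hms, ← hms, inv_mul_cancel₀ ha, sub_self] at hm'
      exact absurd rfl hm'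
    · rw [if_neg hms, sub_zero] at hm'
      refine (eq_single_or_apply_eq_zero_of_mem_support hF hann
        (mem_support_iff.mpr (right_ne_zero_of_mul hm'))).resolve_left fun h => hms h.symm
  · rw [add_sub_cancel, ← smul_eq_C_mul, contract_smul_right, smul_eq_zero,
      or_iff_right (inv_ne_zero ha)]

end NormalForm

theorem stmt_5_general (k : Type*) [Field k] (n : ℕ) (hn : 0 < n)
    (I : Ideal (MvPolynomial (Fin n) k))
    -- `I` is Gorenstein with dual generator the cubic `F` (Macaulay duality)
    (F : MvPolynomial (Fin n) k) (hF : F.IsHomogeneous 3)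
    (hann : ∀ q, q ∈ I ↔ contract q F = 0)
    -- the class of `x₁` in `Q/I` is a linear form of rank one:
    -- multiplication by `x₁` from `(Q/I)₁` to `(Q/I)₂` has rank one
    (hrank : Module.finrank k
      (LinearMap.range
        ((Ideal.Quotient.mkₐ k I).toLinearMap ∘ₗ
          LinearMap.mulLeft k (X (⟨0, hn⟩ : Fin n)) ∘ₗ
          (∑ i : Fin n, (LinearMap.proj i : (Fin n → k) →ₗ[k] k).smulRight (X i)))) = 1)
    -- `x₁² ∉ I`
    (hx1 : (X (⟨0, hn⟩ : Fin n)) ^ 2 ∉ I) :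
    ∃ ψ : MvPolynomial (Fin n) k ≃ₐ[k] MvPolynomial (Fin n) k,
      (∀ i, (ψ (X i)).IsHomogeneous 1) ∧
      (∀ j : Fin n, j ≠ ⟨0, hn⟩ → X (⟨0, hn⟩ : Fin n) * X j ∈ I.map ψ) ∧
      ∃ G : MvPolynomial (Fin n) k, G.IsHomogeneous 3 ∧
        (∀ m ∈ G.support, m ⟨0, hn⟩ = 0) ∧
        (∀ q, q ∈ I.map ψ ↔
          contract q (monomial (Finsupp.single (⟨0, hn⟩ : Fin n) 3) 1 + G) = 0) := by
  set e : Fin n := ⟨0, hn⟩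
  obtain ⟨c, hce, hc⟩ := exists_X_mul_X_sub_mem_of_finrank_eq_one hrank hx1
  set ψ := shear e c hce
  set F' := pullbackDual (ψ.symm : MvPolynomial (Fin n) k →ₐ[k] _) 3 F
  have hF' : F'.IsHomogeneous 3 := isHomogeneous_pullbackDual _ 3 F
  have hJ : ∀ q, q ∈ I.map ψ ↔ contract q F' = 0 :=
    mem_map_iff_contract_pullbackDual_eq_zero hF hann ψ (isHomogeneous_shear_symm_X e c hce)
  have hxx : ∀ j ≠ e, X e * X j ∈ I.map ψ := fun j hj => by
    simpa only [ψ, shear_X_mul_X_sub] using Ideal.mem_map_of_mem ψ (hc j hj)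
  have hx2 : X e ^ 2 ∉ I.map ψ := by
    rwa [mem_map_algEquiv_iff, map_pow, shear_symm_X, hce, C_0, zero_mul, sub_zero]
  have hann' : ∀ j ≠ e, contract (X e * X j) F' = 0 := fun j hj => (hJ _).mp (hxx j hj)
  have ha : coeff (Finsupp.single e 3) F' ≠ 0 :=
    coeff_single_ne_zero_of_contract_ne_zero hF' hann' (w := Finsupp.single e 2) (by simp)
      (by rwa [← X_pow_eq_monomial, Ne, ← hJ])
  obtain ⟨G, hG, hGe, hGF⟩ := exists_contract_eq_zero_iff_monomial_add hF' hann' ha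
  exact ⟨ψ, isHomogeneous_shear_X e c hce, hxx, G, hG, hGe, fun q => (hJ q).trans (hGF q)⟩

/-- Proposition 3.1, case (2): if the class of `x₁` in `Q/I` is a rank-one
linear form and `x₁² ∉ I`, then after a linear change of variables `I` contains
`x₁x₂, …, x₁xₙ` and the dual generator can be written as `F = X₁^{[3]} + G(X₂,…,Xₙ)`. -/
theorem stmt_5 (k : Type*) [Field k] (n : ℕ) (hn : 0 < n)
    (I : Ideal (MvPolynomial (Fin n) k))
    -- `I` is homogeneous
    (hIhom : ∀ p ∈ I, ∀ d : ℕ, homogeneousComponent d p ∈ I)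
    -- `m⁴ ⊆ I ⊆ m²`
    (hm4 : (Ideal.span (Set.range X)) ^ 4 ≤ I)
    (hm2 : I ≤ (Ideal.span (Set.range X)) ^ 2)
    -- `I` is Gorenstein with dual generator the cubic `F` (Macaulay duality)
    (F : MvPolynomial (Fin n) k) (hF : F.IsHomogeneous 3)
    (hann : ∀ q, q ∈ I ↔ contract q F = 0)
    -- the class of `x₁` in `Q/I` is a linear form of rank one:
    -- multiplication by `x₁` from `(Q/I)₁` to `(Q/I)₂` has rank one
    (hrank : Module.finrank k
      (LinearMap.range
        ((Ideal.Quotient.mkₐ k I).toLinearMap ∘ₗ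
          LinearMap.mulLeft k (X (⟨0, hn⟩ : Fin n)) ∘ₗ
          (∑ i : Fin n, (LinearMap.proj i : (Fin n → k) →ₗ[k] k).smulRight (X i)))) = 1)
    -- `x₁² ∉ I`
    (hx1 : (X (⟨0, hn⟩ : Fin n)) ^ 2 ∉ I) :
    ∃ ψ : MvPolynomial (Fin n) k ≃ₐ[k] MvPolynomial (Fin n) k,
      (∀ i, (ψ (X i)).IsHomogeneous 1) ∧
      (∀ j : Fin n, j ≠ ⟨0, hn⟩ → X (⟨0, hn⟩ : Fin n) * X j ∈ I.map ψ) ∧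
      ∃ G : MvPolynomial (Fin n) k, G.IsHomogeneous 3 ∧
        (∀ m ∈ G.support, m ⟨0, hn⟩ = 0) ∧
        (∀ q, q ∈ I.map ψ ↔
          contract q (monomial (Finsupp.single (⟨0, hn⟩ : Fin n) 3) 1 + G) = 0) :=
  stmt_5_general k n hn I F hF hann hrank hx1
end

section
/- In Q = k[x,y,z,w] over a field k, let I = (x², xz, xw, xy+yz−z², a²xy+yw−aw², zw, xy²−w³, y³, z³−w³) for a ∈ k. Setting x' = x, y' = y−z−aw, z' = z+x, w' = w+a²x, the four products x'z', x'w', y'z', y'w' all lie in I. -/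
open MvPolynomial

/-- Example 4.5: the products x'z', x'w', y'z', y'w' lie in the ideal I. -/
theorem stmt_6 (k : Type*) [Field k] (a : k) :
    let x : MvPolynomial (Fin 4) k := X 0
    let y : MvPolynomial (Fin 4) k := X 1
    let z : MvPolynomial (Fin 4) k := X 2
    let w : MvPolynomial (Fin 4) k := X 3
    let I : Ideal (MvPolynomial (Fin 4) k) := Ideal.span
      {x ^ 2, x * z, x * w, x * y + y * z - z ^ 2,
       C a ^ 2 * x * y + y * w - C a * w ^ 2, z * w,
       x * y ^ 2 - w ^ 3, y ^ 3, z ^ 3 - w ^ 3}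
    let x' := x
    let y' := y - z - C a * w
    let z' := z + x
    let w' := w + C a ^ 2 * x
    x' * z' ∈ I ∧ x' * w' ∈ I ∧ y' * z' ∈ I ∧ y' * w' ∈ I := by
  intro x y z w I x' y' z' w'
  have h1 : x ^ 2 ∈ I := Ideal.subset_span (by simp)
  have h2 : x * z ∈ I := Ideal.subset_span (by simp)
  have h3 : x * w ∈ I := Ideal.subset_span (by simp)
  have h4 : x * y + y * z - z ^ 2 ∈ I := Ideal.subset_span (by simp)
  have h5 : C a ^ 2 * x * y + y * w - C a * w ^ 2 ∈ I := Ideal.subset_span (by simp)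
  have h6 : z * w ∈ I := Ideal.subset_span (by simp)
  refine ⟨?_, ?_, ?_, ?_⟩
  · have : x' * z' = x * z + x ^ 2 := by show x * (z + x) = _; ring
    rw [this]; exact I.add_mem h2 h1
  · have : x' * w' = x * w + C a ^ 2 * x ^ 2 := by
      show x * (w + C a ^ 2 * x) = _; ring
    rw [this]; exact I.add_mem h3 (I.mul_mem_left _ h1)
  · have : y' * z' = (x * y + y * z - z ^ 2) - x * z - C a * (z * w) - C a * (x * w) := by
      show (y - z - C a * w) * (z + x) = _; ring
    rw [this]
    exact I.sub_mem (I.sub_mem (I.sub_mem h4 h2) (I.mul_mem_left _ h6)) (I.mul_mem_left _ h3)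
  · have : y' * w' = (C a ^ 2 * x * y + y * w - C a * w ^ 2) - z * w - C a ^ 2 * (x * z)
        - C a ^ 3 * (x * w) := by
      show (y - z - C a * w) * (w + C a ^ 2 * x) = _; ring
    rw [this]
    exact I.sub_mem (I.sub_mem (I.sub_mem h5 h6) (I.mul_mem_left _ h2)) (I.mul_mem_left _ h3)
end

section
/- Let k be a field, Q = k[x,y,z,w], a ∈ k, and J = (x², xz, xw, yz+a²z²−azw−w², yw−aw²). Then the sequence x², yz+a²z²−azw−w², yw−aw² is a regular sequence in Q; in particular grade(J) ≥ 3. -/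
/-!
Write `Q = A[x]` with `A = k[y, z, w]`; then `T₁, T₂ ∈ A`. If `t₁, …, tₘ` is regular in a ring `A`
and `n > 0`, then `xⁿ, t₁, …, tₘ` is regular in `A[x]`: a polynomial lies in
`(xⁿ) + (t₁, …, tᵢ)A[x]` iff its first `n` coefficients lie in `(t₁, …, tᵢ)`, and `tᵢ₊₁` acts on
coefficients. So it suffices that `T₁, T₂` is regular in the domain `A`. As a polynomial in `y`
over `k[z, w]`, `T₁ = z y + (a²z² - azw - w²)` has degree one and coprime coefficients, hence is
prime; and `T₁ ∤ T₂`, since on the curve `(y, z, w) = (s² + as - a², 1, s)` the polynomial `T₁`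
vanishes while `T₂` restricts to `s³ - a²s`.
-/

namespace RingTheory.Sequence

variable {R : Type*} [CommRing R]

lemma isWeaklyRegular_self_iff (rs : List R) :
    IsWeaklyRegular R rs ↔ ∀ i (h : i < rs.length) (f : R),
      rs[i] * f ∈ Ideal.ofList (rs.take i) → f ∈ Ideal.ofList (rs.take i) := by
  simp only [isWeaklyRegular_iff, smul_eq_mul, Ideal.mul_top,
    isSMulRegular_quotient_iff_mem_of_smul_mem]

lemma isRegular_self_iff (rs : List R) :
    IsRegular R rs ↔ (∀ i (h : i < rs.length) (f : R),
      rs[i] * f ∈ Ideal.ofList (rs.take i) → f ∈ Ideal.ofList (rs.take i)) ∧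
      Ideal.ofList rs ≠ ⊤ := by
  rw [isRegular_iff, isWeaklyRegular_self_iff, smul_eq_mul, Ideal.mul_top, ne_comm]

lemma isRegular_map_ringEquiv_iff {S : Type*} [CommRing S] (e : R ≃+* S) (rs : List R) :
    IsRegular S (rs.map e) ↔ IsRegular R rs :=
  (e.toAddEquiv.isRegular_congr <| List.forall₂_map_right_iff.mpr <|
    List.forall₂_same.mpr fun r _ x => map_mul e r x).symm

lemma isRegular_pair_of_prime [IsDomain R] {p q : R} (hp : Prime p) (hpq : ¬ p ∣ q)
    (hpq_top : Ideal.span {p, q} ≠ ⊤) : IsRegular R [p, q] := by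
  rw [isRegular_self_iff]
  refine ⟨fun i hi f hf => ?_, ?_⟩
  · simp only [List.length_cons, List.length_nil] at hi
    interval_cases i
    · simpa [hp.ne_zero] using hf
    · simp only [List.take, Ideal.ofList_cons, Ideal.ofList_nil, sup_bot_eq,
        Ideal.mem_span_singleton] at hf ⊢
      exact (hp.dvd_or_dvd hf).resolve_left hpq
  · simpa [Ideal.span_insert] using hpq_top

end RingTheory.Sequence

namespace Polynomial

open RingTheory.Sequence

variable {A : Type*} [CommRing A]

lemma mem_span_X_pow_sup_map_C_iff (n : ℕ) (I : Ideal A) (f : A[X]) :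
    f ∈ Ideal.span {X ^ n} ⊔ I.map C ↔ ∀ i < n, f.coeff i ∈ I := by
  set φ := mapRingHom (Ideal.Quotient.mk I)
  have hφ : Function.Surjective φ := map_surjective _ Ideal.Quotient.mk_surjective
  have hker : Ideal.comap φ ⊥ = I.map C := by
    rw [← RingHom.ker_eq_comap_bot, ker_mapRingHom, Ideal.mk_ker]
  rw [← hker, ← Ideal.comap_map_of_surjective φ hφ, Ideal.mem_comap, Ideal.map_span,
    Set.image_singleton, map_pow, coe_mapRingHom, map_X, Ideal.mem_span_singleton,
    X_pow_dvd_iff]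
  simp only [coeff_map, Ideal.Quotient.eq_zero_iff_mem]

lemma mem_span_X_pow_sup_map_C_of_C_mul {n : ℕ} {I : Ideal A} {s : A}
    (hs : ∀ a, s * a ∈ I → a ∈ I) {f : A[X]}
    (hf : C s * f ∈ Ideal.span {X ^ n} ⊔ I.map C) : f ∈ Ideal.span {X ^ n} ⊔ I.map C := by
  rw [mem_span_X_pow_sup_map_C_iff] at hf ⊢
  exact fun i hi => hs _ (coeff_C_mul f ▸ hf i hi)

theorem isRegular_X_pow_cons_map_C {n : ℕ} (hn : n ≠ 0) {rs : List A} (h : IsRegular A rs) :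
    IsRegular A[X] (X ^ n :: rs.map C) := by
  rw [isRegular_self_iff] at h ⊢
  obtain ⟨hreg, htop⟩ := h
  refine ⟨fun i hi f hf => ?_, fun hone => htop ?_⟩
  · cases i with
    | zero => simpa [(monic_X_pow n).mul_right_eq_zero_iff] using hf
    | succ i =>
      simp only [List.length_cons, List.length_map, Nat.add_lt_add_iff_right] at hi
      simp only [List.getElem_cons_succ, List.getElem_map, List.take_succ_cons,
        Ideal.ofList_cons, ← List.map_take, ← Ideal.map_ofList] at hf ⊢
      exact mem_span_X_pow_sup_map_C_of_C_mul (hreg i hi) hf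
  · rw [Ideal.ofList_cons, ← Ideal.map_ofList, Ideal.eq_top_iff_one,
      mem_span_X_pow_sup_map_C_iff] at hone
    simpa [Ideal.eq_top_iff_one] using hone 0 (Nat.pos_of_ne_zero hn)

end Polynomial

open MvPolynomial

lemma MvPolynomial.finSuccEquiv_C {R : Type*} [CommRing R] {n : ℕ} (r : R) :
    finSuccEquiv R n (C r) = Polynomial.C (C r) := by
  simp [finSuccEquiv_apply]

section

variable {k : Type*} [Field k]

/-- `T₁` and `T₂` as polynomials in `k[y, z, w]`, where `y, z, w` are `X 0, X 1, X 2`. -/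
noncomputable def t₁ (a : k) : MvPolynomial (Fin 3) k :=
  X 0 * X 1 + C a ^ 2 * X 1 ^ 2 - C a * X 1 * X 2 - X 2 ^ 2

noncomputable def t₂ (a : k) : MvPolynomial (Fin 3) k := X 0 * X 2 - C a * X 2 ^ 2

lemma finSuccEquiv_t₁ (a : k) :
    finSuccEquiv k 2 (t₁ a) = Polynomial.C (X 0) * Polynomial.X +
      Polynomial.C (C a ^ 2 * X 0 ^ 2 - C a * X 0 * X 1 - X 1 ^ 2) := by
  -- `X 1 = X (Fin.succ 0)` holds only up to unfolding, so `simp` cannot use `finSuccEquiv_X_succ`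
  have hz : finSuccEquiv k 2 (X 1) = Polynomial.C (X 0) := finSuccEquiv_X_succ (j := 0)
  have hw : finSuccEquiv k 2 (X 2) = Polynomial.C (X 1) := finSuccEquiv_X_succ (j := 1)
  simp only [t₁, map_sub, map_add, map_mul, map_pow, finSuccEquiv_X_zero, hz, hw,
    finSuccEquiv_C]
  ring

lemma prime_t₁ (a : k) : Prime (t₁ a) := by
  rw [← MulEquiv.prime_iff (finSuccEquiv k 2).toMulEquiv,
    ← UniqueFactorizationMonoid.irreducible_iff_prime]
  show Irreducible (finSuccEquiv k 2 (t₁ a))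
  rw [finSuccEquiv_t₁]
  refine Polynomial.irreducible_C_mul_X_add_C (X_ne_zero 0) ?_
  refine X_prime.irreducible.isRelPrime_iff_not_dvd.mpr fun h => ?_
  simpa using map_dvd (eval ![0, 1]) h

lemma not_t₁_dvd_t₂ (a : k) : ¬ t₁ a ∣ t₂ a := by
  let φ : MvPolynomial (Fin 3) k →ₐ[k] Polynomial k :=
    aeval ![Polynomial.X ^ 2 + Polynomial.C a * Polynomial.X - Polynomial.C (a ^ 2), 1,
      Polynomial.X]
  have h₁ : φ (t₁ a) = 0 := by simp [φ, t₁]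
  have h₂ : φ (t₂ a) = Polynomial.X ^ 3 - Polynomial.C a ^ 2 * Polynomial.X := by
    simp [φ, t₂]; ring
  have h₂_ne : Polynomial.X ^ 3 - Polynomial.C a ^ 2 * Polynomial.X ≠ 0 :=
    (by monicity! : Polynomial.Monic _).ne_zero
  intro h
  simpa [h₁, h₂, h₂_ne] using map_dvd φ h

lemma isRegular_t₁_t₂ (a : k) :
    RingTheory.Sequence.IsRegular (MvPolynomial (Fin 3) k) [t₁ a, t₂ a] := by
  refine RingTheory.Sequence.isRegular_pair_of_prime (prime_t₁ a) (not_t₁_dvd_t₂ a)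
    (ne_top_of_le_ne_top (RingHom.ker_ne_top (constantCoeff (R := k) (σ := Fin 3))) ?_)
  simp [Ideal.span_le, Set.insert_subset_iff, t₁, t₂]

end

/-- `x², yz+a²z²−azw−w², yw−aw²` is a regular sequence in `Q = k[x,y,z,w]`;
in particular `J` contains a regular sequence of length three, so `grade J ≥ 3`. -/
theorem stmt_9 (k : Type*) [Field k] (a : k) :
    let x : MvPolynomial (Fin 4) k := X 0
    let y : MvPolynomial (Fin 4) k := X 1
    let z : MvPolynomial (Fin 4) k := X 2
    let w : MvPolynomial (Fin 4) k := X 3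
    let T₁ := y * z + C a ^ 2 * z ^ 2 - C a * z * w - w ^ 2
    let T₂ := y * w - C a * w ^ 2
    let J : Ideal (MvPolynomial (Fin 4) k) :=
      Ideal.span {x ^ 2, x * z, x * w, T₁, T₂}
    RingTheory.Sequence.IsRegular (MvPolynomial (Fin 4) k) [x ^ 2, T₁, T₂] ∧
      ∀ r ∈ [x ^ 2, T₁, T₂], r ∈ J := by
  intro x y z w T₁ T₂ J
  refine ⟨?_, fun r hr => Ideal.subset_span ?_⟩
  · have hy : finSuccEquiv k 3 y = Polynomial.C (X 0) := finSuccEquiv_X_succ (j := 0)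
    have hz : finSuccEquiv k 3 z = Polynomial.C (X 1) := finSuccEquiv_X_succ (j := 1)
    have hw : finSuccEquiv k 3 w = Polynomial.C (X 2) := finSuccEquiv_X_succ (j := 2)
    have hseq : [x ^ 2, T₁, T₂].map (finSuccEquiv k 3).toRingEquiv =
        Polynomial.X ^ 2 :: [t₁ a, t₂ a].map Polynomial.C := by
      simp [x, T₁, T₂, t₁, t₂, hy, hz, hw, finSuccEquiv_X_zero, finSuccEquiv_C]
    rw [← RingTheory.Sequence.isRegular_map_ringEquiv_iff (finSuccEquiv k 3).toRingEquiv, hseq]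
    exact Polynomial.isRegular_X_pow_cons_map_C two_ne_zero (isRegular_t₁_t₂ a)
  · simp only [List.mem_cons, List.not_mem_nil, or_false] at hr
    rcases hr with rfl | rfl | rfl <;> simp
end

section
/- Let k be a field, Q = k[x,y,z,w], a ∈ k, T₁ = yz+a²z²−azw−w², T₂ = yw−aw², T₅ = y²+a²yz−ayw−a³zw, J = (x², xz, xw, T₁, T₂), and q = xy−z². Then J : (z) = (x, T₁, T₂, T₅) = J : (z²) and J : (q) = J + (x). -/
/-!
Coordinates: `(x, y, z, w) = (X 0, X 1, X 2, X 3)`. Put `u = y - a w`, so that `T₂ = w u` and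
`T₅ = u (y + a² z)`; then `z T₅ = u T₁ + (w + a z) T₂` and `w T₅ = (y + a² z) T₂`.

The heart of the matter is that `z` is a nonzerodivisor modulo `K = (T₁, T₂, T₅)`: setting `z = 0`
turns a relation `z p ∈ K` into a syzygy of `(w², w u, u y)`, and these are computed by hand.
Setting `x = 0` maps both `J` and `I = (x, T₁, T₂, T₅)` into `K`, which gives `J : z = I : z = I`
and hence `J : z² = I`.

For `J : q` with `q = x y - z²`: if `q p ∈ J` then `z² p = x y p - q p ∈ I`, so `p ∈ I`, say
`p = ℓ + c T₅` with `ℓ ∈ J + (x)`. Then `q c T₅ ∈ J`, and setting `z = w = 0` there shows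
`x ∣ y³ c(x, y, 0, 0)`, i.e. `c ∈ (x, z, w)`; and `(x, z, w) T₅ ⊆ J + (x)`.
-/

open MvPolynomial

namespace MvPolynomial

variable {σ R : Type*} [CommRing R] [DecidableEq σ]

noncomputable def substVar (i : σ) (t : MvPolynomial σ R) :
    MvPolynomial σ R →ₐ[R] MvPolynomial σ R :=
  aeval (Function.update X i t)

@[simp] lemma substVar_X_self (i : σ) (t : MvPolynomial σ R) : substVar i t (X i) = t := by
  simp [substVar]

@[simp] lemma substVar_X_of_ne {i j : σ} (h : j ≠ i) (t : MvPolynomial σ R) :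
    substVar i t (X j) = X j := by
  simp [substVar, h]

@[simp] lemma substVar_C (i : σ) (t : MvPolynomial σ R) (c : R) : substVar i t (C c) = C c :=
  (substVar i t).commutes c

lemma X_sub_dvd_sub_substVar (i : σ) (t f : MvPolynomial σ R) :
    X i - t ∣ f - substVar i t f := by
  induction f using MvPolynomial.induction_on with
  | C c => simp
  | add f g hf hg => simpa [add_sub_add_comm] using dvd_add hf hg
  | mul_X f j hf =>
    rw [map_mul, show f * X j - substVar i t f * substVar i t (X j)
      = (f - substVar i t f) * X j + substVar i t f * (X j - substVar i t (X j)) by ring]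
    refine dvd_add (dvd_mul_of_dvd_left hf _) (dvd_mul_of_dvd_right ?_ _)
    by_cases hj : j = i
    · subst hj; simp
    · simp [hj]

lemma X_sub_dvd_of_substVar_eq_zero {i : σ} {t f : MvPolynomial σ R} (h : substVar i t f = 0) :
    X i - t ∣ f := by
  simpa [h] using X_sub_dvd_sub_substVar i t f

lemma X_dvd_sub_substVar_zero (i : σ) (f : MvPolynomial σ R) : X i ∣ f - substVar i 0 f := by
  simpa using X_sub_dvd_sub_substVar i 0 f

lemma mem_span_X_sup_of_substVar_zero_mem {i : σ} {f : MvPolynomial σ R}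
    {I : Ideal (MvPolynomial σ R)} (h : substVar i 0 f ∈ I) : f ∈ Ideal.span {X i} ⊔ I := by
  rw [← sub_add_cancel f (substVar i 0 f)]
  exact Ideal.add_mem _ (Ideal.mem_sup_left (Ideal.mem_span_singleton.mpr
    (X_dvd_sub_substVar_zero i f))) (Ideal.mem_sup_right h)

end MvPolynomial

lemma Ideal.colon_span_singleton_sq_eq {R : Type*} [CommRing R] {M N : Ideal R} {r : R}
    (hM : M.colon (Ideal.span {r}) = N) (hN : N.colon (Ideal.span {r}) = N) :
    M.colon (Ideal.span {r ^ 2}) = N := by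
  ext p
  rw [← hN, Ideal.mem_colon_span_singleton, Ideal.mem_colon_span_singleton, ← hM,
    Ideal.mem_colon_span_singleton, pow_two, mul_assoc]

namespace CaseIb

variable {R : Type*} [CommRing R] (a : R)

noncomputable def T₁ : MvPolynomial (Fin 4) R :=
  X 1 * X 2 + C a ^ 2 * X 2 ^ 2 - C a * X 2 * X 3 - X 3 ^ 2

noncomputable def T₂ : MvPolynomial (Fin 4) R := X 1 * X 3 - C a * X 3 ^ 2

noncomputable def T₅ : MvPolynomial (Fin 4) R :=
  X 1 ^ 2 + C a ^ 2 * X 1 * X 2 - C a * X 1 * X 3 - C a ^ 3 * X 2 * X 3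

noncomputable def J : Ideal (MvPolynomial (Fin 4) R) :=
  Ideal.span {X 0 ^ 2, X 0 * X 2, X 0 * X 3, T₁ a, T₂ a}

noncomputable def I : Ideal (MvPolynomial (Fin 4) R) := Ideal.span {X 0, T₁ a, T₂ a, T₅ a}

noncomputable def K : Ideal (MvPolynomial (Fin 4) R) := Ideal.span {T₁ a, T₂ a, T₅ a}

@[simp] lemma substVar_zero_T₁ : substVar 0 0 (T₁ a) = T₁ a := by simp [T₁]

@[simp] lemma substVar_zero_T₂ : substVar 0 0 (T₂ a) = T₂ a := by simp [T₂]

@[simp] lemma substVar_zero_T₅ : substVar 0 0 (T₅ a) = T₅ a := by simp [T₅]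

lemma X2_mul_T₅ : X 2 * T₅ a = (X 1 - C a * X 3) * T₁ a + (X 3 + C a * X 2) * T₂ a := by
  simp only [T₁, T₂, T₅]; ring

lemma X3_mul_T₅ : X 3 * T₅ a = (X 1 + C a ^ 2 * X 2) * T₂ a := by
  simp only [T₂, T₅]; ring

lemma T₁_mem_J : T₁ a ∈ J a := Ideal.subset_span (by simp)

lemma T₂_mem_J : T₂ a ∈ J a := Ideal.subset_span (by simp)

lemma X2_mul_T₅_mem_J : X 2 * T₅ a ∈ J a := by
  rw [X2_mul_T₅]
  exact add_mem (Ideal.mul_mem_left _ _ (T₁_mem_J a)) (Ideal.mul_mem_left _ _ (T₂_mem_J a))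

lemma X3_mul_T₅_mem_J : X 3 * T₅ a ∈ J a := by
  rw [X3_mul_T₅]
  exact Ideal.mul_mem_left _ _ (T₂_mem_J a)

lemma J_le_I : J a ≤ I a := by
  simp only [J, Ideal.span_le, Set.insert_subset_iff, Set.singleton_subset_iff, SetLike.mem_coe]
  have hx : X 0 ∈ I a := Ideal.subset_span (by simp)
  exact ⟨Ideal.pow_mem_of_mem _ hx 2 two_pos, Ideal.mul_mem_right _ _ hx,
    Ideal.mul_mem_right _ _ hx, Ideal.subset_span (by simp), Ideal.subset_span (by simp)⟩

lemma I_le_sup_span_T₅ : I a ≤ J a ⊔ Ideal.span {X 0} ⊔ Ideal.span {T₅ a} := by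
  simp only [I, Ideal.span_le, Set.insert_subset_iff, Set.singleton_subset_iff, SetLike.mem_coe]
  exact ⟨Ideal.mem_sup_left (Ideal.mem_sup_right (Ideal.mem_span_singleton_self _)),
    Ideal.mem_sup_left (Ideal.mem_sup_left (T₁_mem_J a)),
    Ideal.mem_sup_left (Ideal.mem_sup_left (T₂_mem_J a)),
    Ideal.mem_sup_right (Ideal.mem_span_singleton_self _)⟩

lemma J_le_comap_substVar_X0 : J a ≤ (K a).comap (substVar 0 0) := by
  simp only [J, Ideal.span_le, Set.insert_subset_iff, Set.singleton_subset_iff, SetLike.mem_coe,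
    Ideal.mem_comap]
  refine ⟨by simp, by simp, by simp, ?_, ?_⟩ <;> simpa [K] using Ideal.subset_span (by simp)

lemma I_le_comap_substVar_X0 : I a ≤ (K a).comap (substVar 0 0) := by
  simp only [I, Ideal.span_le, Set.insert_subset_iff, Set.singleton_subset_iff, SetLike.mem_coe,
    Ideal.mem_comap]
  refine ⟨by simp, ?_, ?_, ?_⟩ <;> simpa [K] using Ideal.subset_span (by simp)

lemma J_le_comap_substVar_X2_X3 :
    J a ≤ (Ideal.span {X 0 ^ 2}).comap ((substVar 2 0).comp (substVar 3 0)) := by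
  simp only [J, Ideal.span_le, Set.insert_subset_iff, Set.singleton_subset_iff, SetLike.mem_coe,
    Ideal.mem_comap]
  refine ⟨by simp, ?_, ?_, ?_, ?_⟩ <;> simp [T₁, T₂]

lemma I_le_colon_J : I a ≤ (J a).colon (Ideal.span {X 2} : Ideal (MvPolynomial (Fin 4) R)) := by
  simp only [I, Ideal.span_le, Set.insert_subset_iff, Set.singleton_subset_iff, SetLike.mem_coe,
    Ideal.mem_colon_span_singleton]
  exact ⟨Ideal.subset_span (by simp), Ideal.mul_mem_right _ _ (T₁_mem_J a),
    Ideal.mul_mem_right _ _ (T₂_mem_J a), mul_comm (T₅ a) (X 2) ▸ X2_mul_T₅_mem_J a⟩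

lemma sup_le_colon_q :
    J a ⊔ Ideal.span {X 0} ≤
      (J a).colon (Ideal.span {X 0 * X 1 - X 2 ^ 2} : Ideal (MvPolynomial (Fin 4) R)) := by
  refine sup_le Ideal.le_colon (Ideal.span_le.mpr ?_)
  simp only [J, Set.singleton_subset_iff, SetLike.mem_coe, Ideal.mem_colon_span_singleton]
  rw [show (X 0 * (X 0 * X 1 - X 2 ^ 2) : MvPolynomial (Fin 4) R) =
    X 1 * X 0 ^ 2 - X 2 * (X 0 * X 2) by ring]
  exact sub_mem (Ideal.mul_mem_left _ _ (Ideal.subset_span (by simp)))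
    (Ideal.mul_mem_left _ _ (Ideal.subset_span (by simp)))

lemma sup_le_colon_T₅ :
    Ideal.span {X 3} ⊔ (Ideal.span {X 2} ⊔ Ideal.span {X 0}) ≤
      (J a ⊔ Ideal.span {X 0}).colon (Ideal.span {T₅ a} : Ideal (MvPolynomial (Fin 4) R)) := by
  simp only [sup_le_iff, Ideal.span_singleton_le_iff_mem, Ideal.mem_colon_span_singleton]
  exact ⟨Ideal.mem_sup_left (X3_mul_T₅_mem_J a), Ideal.mem_sup_left (X2_mul_T₅_mem_J a),
    Ideal.mem_sup_right (Ideal.mul_mem_right _ _ (Ideal.mem_span_singleton_self _))⟩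

variable [IsDomain R]

lemma X1_sub_ne_zero : (X 1 - C a * X 3 : MvPolynomial (Fin 4) R) ≠ 0 := by
  intro h
  simpa using congrArg (substVar 3 0) h

/-- The syzygies of `(w², w u, u y)`, where `u = y - a w`; this is `K` after setting `z = 0`. -/
lemma syzygy {A B C' : MvPolynomial (Fin 4) R}
    (h : A * X 3 ^ 2 = (X 1 - C a * X 3) * (B * X 3 + C' * X 1)) :
    ∃ D E, A = (X 1 - C a * X 3) * D ∧ B = D * X 3 - E * X 1 ∧ C' = X 3 * E := by
  obtain ⟨D, rfl⟩ : X 1 - C a * X 3 ∣ A := by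
    refine X_sub_dvd_of_substVar_eq_zero (t := C a * X 3) ?_
    have h' := congrArg (substVar 1 (C a * X 3)) h
    simpa using h'
  have hD : D * X 3 ^ 2 = B * X 3 + C' * X 1 :=
    mul_left_cancel₀ (X1_sub_ne_zero a) (by linear_combination h)
  obtain ⟨E, rfl⟩ : X 3 ∣ C' := by
    simpa using X_sub_dvd_of_substVar_eq_zero (i := 3) (t := 0) (f := C')
      (by simpa [X_ne_zero] using congrArg (substVar 3 0) hD)
  refine ⟨D, E, rfl, mul_left_cancel₀ (X_ne_zero 3) ?_, rfl⟩
  linear_combination -hD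

lemma mem_K_of_mul_X2_mem {p : MvPolynomial (Fin 4) R} (hp : p * X 2 ∈ K a) : p ∈ K a := by
  obtain ⟨A, B, C', h⟩ := Submodule.mem_span_triple.mp hp
  simp only [smul_eq_mul] at h
  obtain ⟨A₁, hA₁⟩ := X_dvd_sub_substVar_zero 2 A
  obtain ⟨B₁, hB₁⟩ := X_dvd_sub_substVar_zero 2 B
  obtain ⟨C₁, hC₁⟩ := X_dvd_sub_substVar_zero 2 C'
  have h₀ : substVar 2 0 A * X 3 ^ 2 =
      (X 1 - C a * X 3) * (substVar 2 0 B * X 3 + substVar 2 0 C' * X 1) := by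
    have h' := congrArg (substVar 2 0) h
    simp only [T₁, T₂, T₅, map_add, map_sub, map_mul, map_pow, substVar_C, substVar_X_self,
      substVar_X_of_ne, ne_eq, Fin.reduceEq, not_false_eq_true] at h'
    linear_combination -h'
  obtain ⟨D, E, hD, hB, hE⟩ := syzygy a h₀
  refine Submodule.mem_span_triple.mpr ⟨A₁, B₁ - C a * D + C a ^ 2 * E, C₁ + D, ?_⟩
  simp only [smul_eq_mul]
  refine mul_right_cancel₀ (X_ne_zero 2) ?_
  rw [← h]
  linear_combination -T₁ a * (hA₁ + hD) - T₂ a * (hB₁ + hB) - T₅ a * (hC₁ + hE)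
    + D * X2_mul_T₅ a - E * X3_mul_T₅ a

lemma mem_I_of_mul_X2_mem {M : Ideal (MvPolynomial (Fin 4) R)}
    (hM : M ≤ (K a).comap (substVar 0 0)) {p : MvPolynomial (Fin 4) R} (hp : p * X 2 ∈ M) :
    p ∈ I a := by
  rw [I, Ideal.span_insert]
  refine mem_span_X_sup_of_substVar_zero_mem (mem_K_of_mul_X2_mem a ?_)
  simpa using hM hp

theorem colon_X2_J : (J a).colon (Ideal.span {X 2} : Ideal (MvPolynomial (Fin 4) R)) = I a :=
  le_antisymm (fun _ hp => mem_I_of_mul_X2_mem a (J_le_comap_substVar_X0 a)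
    (Ideal.mem_colon_span_singleton.mp hp)) (I_le_colon_J a)

theorem colon_X2_I : (I a).colon (Ideal.span {X 2} : Ideal (MvPolynomial (Fin 4) R)) = I a :=
  le_antisymm (fun _ hp => mem_I_of_mul_X2_mem a (I_le_comap_substVar_X0 a)
    (Ideal.mem_colon_span_singleton.mp hp)) Ideal.le_colon

theorem colon_X2_sq_J :
    (J a).colon (Ideal.span {X 2 ^ 2} : Ideal (MvPolynomial (Fin 4) R)) = I a :=
  Ideal.colon_span_singleton_sq_eq (colon_X2_J a) (colon_X2_I a)

lemma mem_sup_of_mul_T₅_mul_q_mem {c : MvPolynomial (Fin 4) R}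
    (hc : c * T₅ a * (X 0 * X 1 - X 2 ^ 2) ∈ J a) :
    c ∈ Ideal.span {X 3} ⊔ (Ideal.span {X 2} ⊔ Ideal.span {X 0}) := by
  refine mem_span_X_sup_of_substVar_zero_mem (mem_span_X_sup_of_substVar_zero_mem ?_)
  have h : X 0 * X 0 ∣ X 0 * (substVar 2 0 (substVar 3 0 c) * X 1 ^ 3) := by
    have h' := Ideal.mem_span_singleton.mp (J_le_comap_substVar_X2_X3 a hc)
    simp only [T₅, AlgHom.comp_apply, map_add, map_sub, map_mul, map_pow, map_zero, substVar_C,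
      substVar_X_self, substVar_X_of_ne, ne_eq, Fin.reduceEq, not_false_eq_true] at h'
    convert h' using 1 <;> ring
  rw [mul_dvd_mul_iff_left (X_ne_zero 0)] at h
  refine Ideal.mem_span_singleton.mpr ((X_prime.dvd_or_dvd h).resolve_right fun h' => ?_)
  simpa using X_prime.dvd_of_dvd_pow h'

theorem colon_q_J :
    (J a).colon (Ideal.span {X 0 * X 1 - X 2 ^ 2} : Ideal (MvPolynomial (Fin 4) R)) =
      J a ⊔ Ideal.span {X 0} := by
  refine le_antisymm (fun p hp => ?_) (sup_le_colon_q a)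
  rw [Ideal.mem_colon_span_singleton] at hp
  have hpI : p ∈ I a := by
    rw [← Ideal.colon_span_singleton_sq_eq (colon_X2_I a) (colon_X2_I a),
      Ideal.mem_colon_span_singleton,
      show p * X 2 ^ 2 = X 0 * (X 1 * p) - p * (X 0 * X 1 - X 2 ^ 2) by ring]
    exact sub_mem (Ideal.mul_mem_right _ _ (Ideal.subset_span (by simp))) (J_le_I a hp)
  obtain ⟨l, hl, t, ht, rfl⟩ := Submodule.mem_sup.mp (I_le_sup_span_T₅ a hpI)
  obtain ⟨c, rfl⟩ := Ideal.mem_span_singleton'.mp ht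
  have hc : c * T₅ a * (X 0 * X 1 - X 2 ^ 2) ∈ J a := by
    have hlq := Ideal.mem_colon_span_singleton.mp (sup_le_colon_q a hl)
    simpa [add_mul] using sub_mem hp hlq
  exact add_mem hl (Ideal.mem_colon_span_singleton.mp
    (sup_le_colon_T₅ a (mem_sup_of_mul_T₅_mul_q_mem a hc)))

end CaseIb

open CaseIb in
/-- Proposition A.1, case Ib: colon ideal computations. -/
theorem stmt_10 (k : Type*) [Field k] (a : k) :
    let x : MvPolynomial (Fin 4) k := X 0
    let y : MvPolynomial (Fin 4) k := X 1
    let z : MvPolynomial (Fin 4) k := X 2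
    let w : MvPolynomial (Fin 4) k := X 3
    let T₁ := y * z + C a ^ 2 * z ^ 2 - C a * z * w - w ^ 2
    let T₂ := y * w - C a * w ^ 2
    let T₅ := y ^ 2 + C a ^ 2 * y * z - C a * y * w - C a ^ 3 * z * w
    let J : Ideal (MvPolynomial (Fin 4) k) :=
      Ideal.span {x ^ 2, x * z, x * w, T₁, T₂}
    let q := x * y - z ^ 2
    J.colon (Ideal.span {z}) = Ideal.span {x, T₁, T₂, T₅} ∧
    J.colon (Ideal.span {z ^ 2}) = Ideal.span {x, T₁, T₂, T₅} ∧
    J.colon (Ideal.span {q}) = J ⊔ Ideal.span {x} :=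
  ⟨colon_X2_J a, colon_X2_sq_J a, colon_q_J a⟩
end

section
/- Let k be a field and Q = k[x,y,z,w]. For J = (x², xz, xw, xy+yz−zw, yw−w², z²), the colon ideal satisfies J : (y) = J. -/
open MvPolynomial

namespace Stmt14Aux

variable {k : Type*} [Field k]

noncomputable section

abbrev Q4 (k : Type*) [Field k] : Type _ := MvPolynomial (Fin 4) k

def xx : Q4 k := MvPolynomial.X 0
def yy : Q4 k := MvPolynomial.X 1
def zz : Q4 k := MvPolynomial.X 2
def ww : Q4 k := MvPolynomial.X 3

def JJ (k : Type*) [Field k] : Ideal (Q4 k) :=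
  Ideal.span {xx ^ 2, xx * zz, xx * ww, xx * yy + yy * zz - zz * ww,
    yy * ww - ww ^ 2, zz ^ 2}

lemma g1_mem : (xx ^ 2 : Q4 k) ∈ JJ k := Ideal.subset_span (by simp [Set.mem_insert_iff])
lemma g2_mem : (xx * zz : Q4 k) ∈ JJ k := Ideal.subset_span (by simp [Set.mem_insert_iff])
lemma g3_mem : (xx * ww : Q4 k) ∈ JJ k := Ideal.subset_span (by simp [Set.mem_insert_iff])
lemma g4_mem : (xx * yy + yy * zz - zz * ww : Q4 k) ∈ JJ k :=
  Ideal.subset_span (by simp [Set.mem_insert_iff])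
lemma g5_mem : (yy * ww - ww ^ 2 : Q4 k) ∈ JJ k :=
  Ideal.subset_span (by simp [Set.mem_insert_iff])
lemma g6_mem : (zz ^ 2 : Q4 k) ∈ JJ k := Ideal.subset_span (by simp [Set.mem_insert_iff])

/-- `f` decomposes as an element of `J` plus a normal form. -/
def Good (f : Q4 k) : Prop :=
  ∃ j ∈ JJ k, ∃ (a : k) (p q r s : Polynomial k),
    f = j + a • xx + Polynomial.aeval yy p + Polynomial.aeval yy q * zz
      + Polynomial.aeval ww r + Polynomial.aeval ww s * zz

lemma good_of_mem {f : Q4 k} (hf : f ∈ JJ k) : Good f :=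
  ⟨f, hf, 0, 0, 0, 0, 0, by simp⟩

lemma good_add {f g : Q4 k} (hf : Good f) (hg : Good g) : Good (f + g) := by
  obtain ⟨j, hj, a, p, q, r, s, rfl⟩ := hf
  obtain ⟨j', hj', a', p', q', r', s', rfl⟩ := hg
  exact ⟨j + j', Ideal.add_mem _ hj hj', a + a', p + p', q + q', r + r', s + s',
    by simp [add_smul, map_add]; ring⟩

lemma good_smul {f : Q4 k} (c : k) (hf : Good f) : Good (c • f) := by
  obtain ⟨j, hj, a, p, q, r, s, rfl⟩ := hf
  have hcj : c • j ∈ JJ k := by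
    rw [MvPolynomial.smul_eq_C_mul]; exact Ideal.mul_mem_left _ _ hj
  refine ⟨c • j, hcj, c * a, c • p, c • q, c • r, c • s, ?_⟩
  simp [smul_add, map_smul, mul_smul, smul_mul_assoc, mul_comm]

lemma good_C (a : k) : Good (MvPolynomial.C a : Q4 k) :=
  ⟨0, Ideal.zero_mem _, 0, Polynomial.C a, 0, 0, 0, by
    simp [Polynomial.aeval_C, MvPolynomial.algebraMap_eq]⟩

lemma good_x : Good (xx : Q4 k) := ⟨0, Ideal.zero_mem _, 1, 0, 0, 0, 0, by simp⟩

lemma good_aevalY (p : Polynomial k) : Good (Polynomial.aeval (yy : Q4 k) p) :=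
  ⟨0, Ideal.zero_mem _, 0, p, 0, 0, 0, by simp⟩

lemma good_aevalYz (q : Polynomial k) : Good (Polynomial.aeval (yy : Q4 k) q * zz) :=
  ⟨0, Ideal.zero_mem _, 0, 0, q, 0, 0, by simp⟩

lemma good_aevalW (r : Polynomial k) : Good (Polynomial.aeval (ww : Q4 k) r) :=
  ⟨0, Ideal.zero_mem _, 0, 0, 0, r, 0, by simp⟩

lemma good_aevalWz (s : Polynomial k) : Good (Polynomial.aeval (ww : Q4 k) s * zz) :=
  ⟨0, Ideal.zero_mem _, 0, 0, 0, 0, s, by simp⟩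

lemma aeval_divX_eq (u : Q4 k) (r : Polynomial k) :
    Polynomial.aeval u r = u * Polynomial.aeval u r.divX
      + MvPolynomial.C (r.coeff 0) := by
  conv_lhs => rw [← Polynomial.X_mul_divX_add (p := r)]
  rw [map_add, map_mul, Polynomial.aeval_X, Polynomial.aeval_C, MvPolynomial.algebraMap_eq]

/-- closure of `Good` under multiplication by `y`. -/
lemma good_mulY {f : Q4 k} (hf : Good f) : Good (yy * f) := by
  obtain ⟨j, hj, a, p, q, r, s, rfl⟩ := hf
  simp only [mul_add]
  refine good_add (good_add (good_add (good_add (good_add ?_ ?_) ?_) ?_) ?_) ?_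
  · exact good_of_mem (Ideal.mul_mem_left _ _ hj)
  · -- y * (a • x)
    rw [mul_smul_comm]
    refine good_smul a ?_
    refine ⟨xx * yy + yy * zz - zz * ww, g4_mem, 0, 0, -Polynomial.X, 0, Polynomial.X, ?_⟩
    simp; ring
  · -- y * aeval y p
    have : yy * Polynomial.aeval (yy : Q4 k) p
        = Polynomial.aeval (yy : Q4 k) (Polynomial.X * p) := by simp
    rw [this]; exact good_aevalY _
  · -- y * (aeval y q * z)
    have : yy * (Polynomial.aeval (yy : Q4 k) q * zz)
        = Polynomial.aeval (yy : Q4 k) (Polynomial.X * q) * zz := by simp; ring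
    rw [this]; exact good_aevalYz _
  · -- y * aeval w r
    refine ⟨(yy * ww - ww ^ 2) * Polynomial.aeval ww r.divX,
      Ideal.mul_mem_right _ _ g5_mem, 0,
      Polynomial.C (r.coeff 0) * Polynomial.X, 0,
      Polynomial.X ^ 2 * r.divX, 0, ?_⟩
    rw [aeval_divX_eq ww r]
    simp [MvPolynomial.algebraMap_eq]
    ring
  · -- y * (aeval w s * z)
    refine ⟨(yy * ww - ww ^ 2) * (Polynomial.aeval ww s.divX * zz),
      Ideal.mul_mem_right _ _ g5_mem, 0, 0,
      Polynomial.C (s.coeff 0) * Polynomial.X,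
      0, Polynomial.X ^ 2 * s.divX, ?_⟩
    rw [aeval_divX_eq ww s]
    simp [MvPolynomial.algebraMap_eq]
    ring

lemma good_x_mul_ypow : ∀ n : ℕ, Good (xx * yy ^ n : Q4 k)
  | 0 => by simpa using good_x
  | (n + 1) => by
      have : (xx * yy ^ (n + 1) : Q4 k) = yy * (xx * yy ^ n) := by ring
      rw [this]; exact good_mulY (good_x_mul_ypow n)

lemma good_w_mul_ypow : ∀ n : ℕ, Good (ww * yy ^ n : Q4 k)
  | 0 => by simpa using good_aevalW Polynomial.X
  | (n + 1) => by
      have : (ww * yy ^ (n + 1) : Q4 k) = yy * (ww * yy ^ n) := by ring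
      rw [this]; exact good_mulY (good_w_mul_ypow n)

lemma good_wz_mul_ypow : ∀ n : ℕ, Good (ww * zz * yy ^ n : Q4 k)
  | 0 => by simpa using good_aevalWz Polynomial.X
  | (n + 1) => by
      have : (ww * zz * yy ^ (n + 1) : Q4 k) = yy * (ww * zz * yy ^ n) := by ring
      rw [this]; exact good_mulY (good_wz_mul_ypow n)

lemma good_mulX {f : Q4 k} (hf : Good f) : Good (xx * f) := by
  obtain ⟨j, hj, a, p, q, r, s, rfl⟩ := hf
  simp only [mul_add]
  refine good_add (good_add (good_add (good_add (good_add ?_ ?_) ?_) ?_) ?_) ?_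
  · exact good_of_mem (Ideal.mul_mem_left _ _ hj)
  · rw [mul_smul_comm]
    refine good_smul a (good_of_mem ?_)
    have : (xx * xx : Q4 k) = xx ^ 2 := by ring
    rw [this]; exact g1_mem
  · -- x * aeval y p
    induction p using Polynomial.induction_on' with
    | add u v hu hv => rw [map_add, mul_add]; exact good_add hu hv
    | monomial n c =>
        have : xx * Polynomial.aeval (yy : Q4 k) (Polynomial.monomial n c)
            = c • (xx * yy ^ n) := by
          simp [Polynomial.aeval_monomial, MvPolynomial.algebraMap_eq,
            Algebra.smul_def]
          ring
        rw [this]; exact good_smul c (good_x_mul_ypow n)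
  · -- x * (aeval y q * z)
    refine good_of_mem ?_
    have : xx * (Polynomial.aeval (yy : Q4 k) q * zz)
        = (xx * zz) * Polynomial.aeval (yy : Q4 k) q := by ring
    rw [this]; exact Ideal.mul_mem_right _ _ g2_mem
  · -- x * aeval w r
    refine ⟨(xx * ww) * Polynomial.aeval ww r.divX, Ideal.mul_mem_right _ _ g3_mem,
      r.coeff 0, 0, 0, 0, 0, ?_⟩
    rw [aeval_divX_eq ww r]
    simp [MvPolynomial.algebraMap_eq, Algebra.smul_def]
    ring
  · -- x * (aeval w s * z)
    refine good_of_mem ?_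
    have : xx * (Polynomial.aeval (ww : Q4 k) s * zz)
        = (xx * zz) * Polynomial.aeval (ww : Q4 k) s := by ring
    rw [this]; exact Ideal.mul_mem_right _ _ g2_mem

lemma good_mulZ {f : Q4 k} (hf : Good f) : Good (zz * f) := by
  obtain ⟨j, hj, a, p, q, r, s, rfl⟩ := hf
  simp only [mul_add]
  refine good_add (good_add (good_add (good_add (good_add ?_ ?_) ?_) ?_) ?_) ?_
  · exact good_of_mem (Ideal.mul_mem_left _ _ hj)
  · rw [mul_smul_comm]
    refine good_smul a (good_of_mem ?_)
    have : (zz * xx : Q4 k) = xx * zz := by ring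
    rw [this]; exact g2_mem
  · have : zz * Polynomial.aeval (yy : Q4 k) p
        = Polynomial.aeval (yy : Q4 k) p * zz := by ring
    rw [this]; exact good_aevalYz p
  · refine good_of_mem ?_
    have : zz * (Polynomial.aeval (yy : Q4 k) q * zz)
        = zz ^ 2 * Polynomial.aeval (yy : Q4 k) q := by ring
    rw [this]; exact Ideal.mul_mem_right _ _ g6_mem
  · have : zz * Polynomial.aeval (ww : Q4 k) r
        = Polynomial.aeval (ww : Q4 k) r * zz := by ring
    rw [this]; exact good_aevalWz r
  · refine good_of_mem ?_
    have : zz * (Polynomial.aeval (ww : Q4 k) s * zz)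
        = zz ^ 2 * Polynomial.aeval (ww : Q4 k) s := by ring
    rw [this]; exact Ideal.mul_mem_right _ _ g6_mem

lemma good_mulW {f : Q4 k} (hf : Good f) : Good (ww * f) := by
  obtain ⟨j, hj, a, p, q, r, s, rfl⟩ := hf
  simp only [mul_add]
  refine good_add (good_add (good_add (good_add (good_add ?_ ?_) ?_) ?_) ?_) ?_
  · exact good_of_mem (Ideal.mul_mem_left _ _ hj)
  · rw [mul_smul_comm]
    refine good_smul a (good_of_mem ?_)
    have : (ww * xx : Q4 k) = xx * ww := by ring
    rw [this]; exact g3_mem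
  · induction p using Polynomial.induction_on' with
    | add u v hu hv => rw [map_add, mul_add]; exact good_add hu hv
    | monomial n c =>
        have : ww * Polynomial.aeval (yy : Q4 k) (Polynomial.monomial n c)
            = c • (ww * yy ^ n) := by
          simp [Polynomial.aeval_monomial, MvPolynomial.algebraMap_eq,
            Algebra.smul_def]
          ring
        rw [this]; exact good_smul c (good_w_mul_ypow n)
  · induction q using Polynomial.induction_on' with
    | add u v hu hv =>
        rw [map_add, add_mul, mul_add]; exact good_add hu hv
    | monomial n c =>
        have : ww * (Polynomial.aeval (yy : Q4 k) (Polynomial.monomial n c) * zz)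
            = c • (ww * zz * yy ^ n) := by
          simp [Polynomial.aeval_monomial, MvPolynomial.algebraMap_eq,
            Algebra.smul_def]
          ring
        rw [this]; exact good_smul c (good_wz_mul_ypow n)
  · have : ww * Polynomial.aeval (ww : Q4 k) r
        = Polynomial.aeval (ww : Q4 k) (Polynomial.X * r) := by simp
    rw [this]; exact good_aevalW _
  · have : ww * (Polynomial.aeval (ww : Q4 k) s * zz)
        = Polynomial.aeval (ww : Q4 k) (Polynomial.X * s) * zz := by simp; ring
    rw [this]; exact good_aevalWz _

lemma good_all (f : Q4 k) : Good f := by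
  induction f using MvPolynomial.induction_on with
  | C a => exact good_C a
  | add u v hu hv => exact good_add hu hv
  | mul_X u i hu =>
      fin_cases i
      · rw [mul_comm]; exact good_mulX hu
      · rw [mul_comm]; exact good_mulY hu
      · rw [mul_comm]; exact good_mulZ hu
      · rw [mul_comm]; exact good_mulW hu

/-! ### The two evaluation maps -/

abbrev R2 (k : Type*) [Field k] : Type _ := Polynomial (Polynomial k)

def φ1 : Q4 k →ₐ[k] R2 k :=
  MvPolynomial.aeval ![-Polynomial.X, Polynomial.C Polynomial.X, Polynomial.X, 0]

def φ2 : Q4 k →ₐ[k] R2 k :=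
  MvPolynomial.aeval ![0, Polynomial.C Polynomial.X, Polynomial.X, Polynomial.C Polynomial.X]

def T2 (k : Type*) [Field k] : Ideal (R2 k) := Ideal.span {Polynomial.X ^ 2}

lemma phi1_x : φ1 (xx : Q4 k) = -Polynomial.X := by simp [φ1, xx]
lemma phi1_y : φ1 (yy : Q4 k) = Polynomial.C Polynomial.X := by simp [φ1, yy]
lemma phi1_z : φ1 (zz : Q4 k) = Polynomial.X := by simp [φ1, zz]
lemma phi1_w : φ1 (ww : Q4 k) = 0 := by simp [φ1, ww]
lemma phi2_x : φ2 (xx : Q4 k) = 0 := by simp [φ2, xx]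
lemma phi2_y : φ2 (yy : Q4 k) = Polynomial.C Polynomial.X := by simp [φ2, yy]
lemma phi2_z : φ2 (zz : Q4 k) = Polynomial.X := by simp [φ2, zz]
lemma phi2_w : φ2 (ww : Q4 k) = Polynomial.C Polynomial.X := by simp [φ2, ww]

lemma phi1_J : ∀ g ∈ JJ k, φ1 g ∈ T2 k := by
  intro g hg
  have : JJ k ≤ Ideal.comap (φ1 (k := k)) (T2 k) := by
    rw [JJ, Ideal.span_le]
    intro a ha
    simp only [Set.mem_insert_iff, Set.mem_singleton_iff] at ha
    rcases ha with rfl | rfl | rfl | rfl | rfl | rfl <;>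
      refine Ideal.mem_comap.mpr (Ideal.mem_span_singleton.mpr ?_)
    · exact ⟨1, by rw [map_pow, phi1_x]; ring⟩
    · exact ⟨-1, by rw [map_mul, phi1_x, phi1_z]; ring⟩
    · exact ⟨0, by rw [map_mul, phi1_x, phi1_w]; ring⟩
    · exact ⟨0, by rw [map_sub, map_add, map_mul, map_mul, map_mul,
        phi1_x, phi1_y, phi1_z, phi1_w]; ring⟩
    · exact ⟨0, by rw [map_sub, map_mul, map_pow, phi1_y, phi1_w]; ring⟩
    · exact ⟨1, by rw [map_pow, phi1_z]; ring⟩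
  exact this hg

lemma phi2_J : ∀ g ∈ JJ k, φ2 g ∈ T2 k := by
  intro g hg
  have : JJ k ≤ Ideal.comap (φ2 (k := k)) (T2 k) := by
    rw [JJ, Ideal.span_le]
    intro a ha
    simp only [Set.mem_insert_iff, Set.mem_singleton_iff] at ha
    rcases ha with rfl | rfl | rfl | rfl | rfl | rfl <;>
      refine Ideal.mem_comap.mpr (Ideal.mem_span_singleton.mpr ?_)
    · exact ⟨0, by rw [map_pow, phi2_x]; ring⟩
    · exact ⟨0, by rw [map_mul, phi2_x, phi2_z]; ring⟩
    · exact ⟨0, by rw [map_mul, phi2_x, phi2_w]; ring⟩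
    · exact ⟨0, by rw [map_sub, map_add, map_mul, map_mul, map_mul,
        phi2_x, phi2_y, phi2_z, phi2_w]; ring⟩
    · exact ⟨0, by rw [map_sub, map_mul, map_pow, phi2_y, phi2_w]; ring⟩
    · exact ⟨1, by rw [map_pow, phi2_z]; ring⟩
  exact this hg

lemma aeval_CX (p : Polynomial k) :
    Polynomial.aeval (Polynomial.C Polynomial.X : R2 k) p = Polynomial.C p := by
  rw [show (Polynomial.C Polynomial.X : R2 k)
      = Polynomial.CAlgHom (R := k) Polynomial.X from rfl,
    Polynomial.aeval_algHom_apply]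
  simp

lemma aeval_zero' (p : Polynomial k) :
    Polynomial.aeval (0 : R2 k) p = Polynomial.C (Polynomial.C (p.coeff 0)) := by
  rw [Polynomial.aeval_def, Polynomial.eval₂_at_zero]
  rfl

/-- image of the normal form under φ1 -/
lemma phi1_v (a : k) (p q r s : Polynomial k) :
    φ1 (a • xx + Polynomial.aeval yy p + Polynomial.aeval yy q * zz
      + Polynomial.aeval ww r + Polynomial.aeval ww s * zz : Q4 k)
    = Polynomial.C (p + Polynomial.C (r.coeff 0))
      + Polynomial.C (q + Polynomial.C (s.coeff 0) - Polynomial.C a) * Polynomial.X := by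
  have hx : φ1 (xx : Q4 k) = -Polynomial.X := by simp [φ1, xx]
  have hy : φ1 (yy : Q4 k) = Polynomial.C Polynomial.X := by simp [φ1, yy]
  have hz : φ1 (zz : Q4 k) = Polynomial.X := by simp [φ1, zz]
  have hw : φ1 (ww : Q4 k) = 0 := by simp [φ1, ww]
  have hp : φ1 (Polynomial.aeval (yy : Q4 k) p) = Polynomial.C p := by
    rw [← Polynomial.aeval_algHom_apply, hy, aeval_CX]
  have hq : φ1 (Polynomial.aeval (yy : Q4 k) q) = Polynomial.C q := by
    rw [← Polynomial.aeval_algHom_apply, hy, aeval_CX]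
  have hr : φ1 (Polynomial.aeval (ww : Q4 k) r)
      = Polynomial.C (Polynomial.C (r.coeff 0)) := by
    rw [← Polynomial.aeval_algHom_apply, hw, aeval_zero']
  have hs : φ1 (Polynomial.aeval (ww : Q4 k) s)
      = Polynomial.C (Polynomial.C (s.coeff 0)) := by
    rw [← Polynomial.aeval_algHom_apply, hw, aeval_zero']
  have ha : φ1 ((a : k) • xx : Q4 k) = a • (-Polynomial.X : R2 k) := by
    rw [map_smul, hx]
  rw [map_add, map_add, map_add, map_add, map_mul, map_mul, ha, hp, hq, hr, hs, hz]
  have : (a • (-Polynomial.X : R2 k))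
      = -(Polynomial.C (Polynomial.C a) * Polynomial.X) := by
    rw [Algebra.smul_def]; simp [Polynomial.algebraMap_apply]; ring
  rw [this]
  simp only [map_add, map_sub]
  ring

/-- image of the normal form under φ2 -/
lemma phi2_v (a : k) (p q r s : Polynomial k) :
    φ2 (a • xx + Polynomial.aeval yy p + Polynomial.aeval yy q * zz
      + Polynomial.aeval ww r + Polynomial.aeval ww s * zz : Q4 k)
    = Polynomial.C (p + r) + Polynomial.C (q + s) * Polynomial.X := by
  have hx : φ2 (xx : Q4 k) = 0 := by simp [φ2, xx]
  have hy : φ2 (yy : Q4 k) = Polynomial.C Polynomial.X := by simp [φ2, yy]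
  have hz : φ2 (zz : Q4 k) = Polynomial.X := by simp [φ2, zz]
  have hw : φ2 (ww : Q4 k) = Polynomial.C Polynomial.X := by simp [φ2, ww]
  have hp : φ2 (Polynomial.aeval (yy : Q4 k) p) = Polynomial.C p := by
    rw [← Polynomial.aeval_algHom_apply, hy, aeval_CX]
  have hq : φ2 (Polynomial.aeval (yy : Q4 k) q) = Polynomial.C q := by
    rw [← Polynomial.aeval_algHom_apply, hy, aeval_CX]
  have hr : φ2 (Polynomial.aeval (ww : Q4 k) r) = Polynomial.C r := by
    rw [← Polynomial.aeval_algHom_apply, hw, aeval_CX]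
  have hs : φ2 (Polynomial.aeval (ww : Q4 k) s) = Polynomial.C s := by
    rw [← Polynomial.aeval_algHom_apply, hw, aeval_CX]
  have ha : φ2 ((a : k) • xx : Q4 k) = 0 := by rw [map_smul, hx, smul_zero]
  rw [map_add, map_add, map_add, map_add, map_mul, map_mul, ha, hp, hq, hr, hs, hz]
  simp only [map_add]
  ring

/-- key divisibility extraction: if `X^2 ∣ C X * (C A + C B * X)` then `A = 0 ∧ B = 0`. -/
lemma extract (A B : Polynomial k)
    (h : (Polynomial.X : R2 k) ^ 2 ∣ Polynomial.C Polynomial.X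
        * (Polynomial.C A + Polynomial.C B * Polynomial.X)) :
    A = 0 ∧ B = 0 := by
  rw [Polynomial.X_pow_dvd_iff] at h
  have h0 := h 0 (by norm_num)
  have h1 := h 1 (by norm_num)
  simp [Polynomial.coeff_C_mul, Polynomial.coeff_add, Polynomial.coeff_C] at h0 h1
  exact ⟨h0, h1⟩

end

end Stmt14Aux

/-- case IIIa: `J : (y) = J`, i.e. `y` is a nonzerodivisor on `Q/J`. -/
theorem stmt_14 (k : Type*) [Field k] :
    let x : MvPolynomial (Fin 4) k := X 0
    let y : MvPolynomial (Fin 4) k := X 1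
    let z : MvPolynomial (Fin 4) k := X 2
    let w : MvPolynomial (Fin 4) k := X 3
    let J : Ideal (MvPolynomial (Fin 4) k) :=
      Ideal.span {x ^ 2, x * z, x * w, x * y + y * z - z * w, y * w - w ^ 2, z ^ 2}
    J.colon (Ideal.span {y}) = J := by
  intro x y z w J
  open Stmt14Aux in
  have hJ : J = JJ k := rfl
  apply le_antisymm
  · intro f hf
    rw [Ideal.mem_colon_span_singleton] at hf
    -- hf : f * y ∈ J
    rw [hJ] at hf ⊢
    obtain ⟨j, hj, a, p, q, r, s, hfeq⟩ := Stmt14Aux.good_all (k := k) f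
    set v : MvPolynomial (Fin 4) k :=
      a • Stmt14Aux.xx + Polynomial.aeval Stmt14Aux.yy p
        + Polynomial.aeval Stmt14Aux.yy q * Stmt14Aux.zz
        + Polynomial.aeval Stmt14Aux.ww r
        + Polynomial.aeval Stmt14Aux.ww s * Stmt14Aux.zz with hv
    have hfv : f = j + v := by rw [hfeq, hv]; ring
    have hyv : Stmt14Aux.yy * v ∈ Stmt14Aux.JJ k := by
      have h1 : f * y = Stmt14Aux.yy * v + Stmt14Aux.yy * j := by
        rw [hfv]; show (j + v) * y = y * v + y * j; ring
      have h2 : Stmt14Aux.yy * j ∈ Stmt14Aux.JJ k := Ideal.mul_mem_left _ _ hj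
      have := (Stmt14Aux.JJ k).sub_mem hf h2
      rw [h1] at this; simpa using this
    -- apply φ1
    have d1 := Stmt14Aux.phi1_J _ hyv
    have d2 := Stmt14Aux.phi2_J _ hyv
    rw [map_mul, Stmt14Aux.phi1_v] at d1
    rw [map_mul, Stmt14Aux.phi2_v] at d2
    have hy1 : Stmt14Aux.φ1 (Stmt14Aux.yy : Stmt14Aux.Q4 k)
        = Polynomial.C Polynomial.X := by
      simp [Stmt14Aux.φ1, Stmt14Aux.yy]
    have hy2 : Stmt14Aux.φ2 (Stmt14Aux.yy : Stmt14Aux.Q4 k)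
        = Polynomial.C Polynomial.X := by
      simp [Stmt14Aux.φ2, Stmt14Aux.yy]
    rw [hy1] at d1
    rw [hy2] at d2
    rw [Stmt14Aux.T2, Ideal.mem_span_singleton] at d1 d2
    obtain ⟨e3, e4⟩ := Stmt14Aux.extract _ _ d1
    obtain ⟨e1, e2⟩ := Stmt14Aux.extract _ _ d2
    -- derive the vanishing of v
    have hr : r = -p := by linear_combination e1
    have hs : s = -q := by linear_combination e2
    have hp : p = Polynomial.C (p.coeff 0) := by
      have : r.coeff 0 = -(p.coeff 0) := by rw [hr]; simp
      rw [this] at e3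
      linear_combination e3 - Polynomial.C_neg (a := p.coeff 0)
    have ha : a = 0 := by
      have hs0 : s.coeff 0 = -(q.coeff 0) := by rw [hs]; simp
      have h40 := congrArg (fun t => Polynomial.coeff t 0) e4
      simp [hs0] at h40
      exact h40
    have hq : q = Polynomial.C (q.coeff 0) := by
      have : s.coeff 0 = -(q.coeff 0) := by rw [hs]; simp
      rw [this, ha] at e4
      simp at e4
      linear_combination e4
    have hv0 : v = 0 := by
      rw [hv, ha, hp, hq, hr, hs, hp, hq]
      simp [Polynomial.aeval_C, MvPolynomial.algebraMap_eq]
    rw [hfv, hv0, add_zero]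
    exact hj
  · intro f hf
    rw [Ideal.mem_colon_span_singleton]
    exact Ideal.mul_mem_right _ _ hf
end

section
/- Let k be a field and Q = k[x,y,z,w]. For J = (x², xz, xw, xy−zw, z², axy+yz−w²) with a ∈ k, the elements zw², (w²−yz)w, and w⁴ all belong to J, and the colon ideal satisfies J : (w) = J + (x). -/
/-!
`Q/J` is a free `k[y]`-module on `1, x, z, w`: modulo `J` every product of two of `x, z, w`
vanishes except `zw = yx` and `w² = a·yx + yz`. Realising this multiplication table as a
commutative ring `QuotModel k a` gives a map `Q → QuotModel k a` killing `J`; the map back,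
`⟨p, q, r, s⟩ ↦ p + qx + rz + sw` modulo `J`, is a ring map, so the kernel is exactly `J`.
Inside the model, `u · w = ⟨0, y(r + a s), y s, p⟩`, and since `y` is a non-zero-divisor of
`k[y]` this vanishes only for `u = q x`; hence `f w ∈ J` forces `f ∈ J + (x)`.
-/

open MvPolynomial

/-- `⟨p, q, r, s⟩` stands for `p + q x + r z + s w` with coefficients in `k[y]`. -/
@[ext]
structure QuotModel (k : Type*) [CommRing k] (a : k) where
  p : Polynomial k
  q : Polynomial k
  r : Polynomial k
  s : Polynomial k

noncomputable section

namespace QuotModel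

variable {k : Type*} [CommRing k] {a : k}

instance : Zero (QuotModel k a) := ⟨⟨0, 0, 0, 0⟩⟩
instance : One (QuotModel k a) := ⟨⟨1, 0, 0, 0⟩⟩
instance : Add (QuotModel k a) := ⟨fun u v => ⟨u.p + v.p, u.q + v.q, u.r + v.r, u.s + v.s⟩⟩
instance : Neg (QuotModel k a) := ⟨fun u => ⟨-u.p, -u.q, -u.r, -u.s⟩⟩
instance : Mul (QuotModel k a) :=
  ⟨fun u v =>
    ⟨u.p * v.p,
     u.p * v.q + u.q * v.p + Polynomial.X * (u.r * v.s + u.s * v.r)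
       + Polynomial.C a * Polynomial.X * (u.s * v.s),
     u.p * v.r + u.r * v.p + Polynomial.X * (u.s * v.s),
     u.p * v.s + u.s * v.p⟩⟩

@[simp] lemma zero_def : (0 : QuotModel k a) = ⟨0, 0, 0, 0⟩ := rfl
@[simp] lemma one_def : (1 : QuotModel k a) = ⟨1, 0, 0, 0⟩ := rfl
@[simp] lemma add_def (u v : QuotModel k a) :
    u + v = ⟨u.p + v.p, u.q + v.q, u.r + v.r, u.s + v.s⟩ := rfl
@[simp] lemma neg_def (u : QuotModel k a) : -u = ⟨-u.p, -u.q, -u.r, -u.s⟩ := rfl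
@[simp] lemma mul_def (u v : QuotModel k a) :
    u * v = ⟨u.p * v.p,
     u.p * v.q + u.q * v.p + Polynomial.X * (u.r * v.s + u.s * v.r)
       + Polynomial.C a * Polynomial.X * (u.s * v.s),
     u.p * v.r + u.r * v.p + Polynomial.X * (u.s * v.s),
     u.p * v.s + u.s * v.p⟩ := rfl

instance : CommRing (QuotModel k a) where
  add_assoc u v w := by ext : 1 <;> simp only [add_def] <;> ring
  zero_add u := by ext : 1 <;> simp
  add_zero u := by ext : 1 <;> simp
  add_comm u v := by ext : 1 <;> simp only [add_def] <;> ring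
  neg_add_cancel u := by ext : 1 <;> simp
  mul_assoc u v w := by ext : 1 <;> simp only [mul_def] <;> ring
  one_mul u := by ext : 1 <;> simp
  mul_one u := by ext : 1 <;> simp
  left_distrib u v w := by ext : 1 <;> simp only [mul_def, add_def] <;> ring
  right_distrib u v w := by ext : 1 <;> simp only [mul_def, add_def] <;> ring
  zero_mul u := by ext : 1 <;> simp
  mul_zero u := by ext : 1 <;> simp
  mul_comm u v := by ext : 1 <;> simp only [mul_def] <;> ring
  nsmul := nsmulRec
  zsmul := zsmulRec

def ofPolynomial : Polynomial k →+* QuotModel k a where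
  toFun f := ⟨f, 0, 0, 0⟩
  map_one' := rfl
  map_mul' f g := by ext : 1 <;> simp
  map_zero' := rfl
  map_add' f g := by ext : 1 <;> simp

instance : Algebra k (QuotModel k a) := (ofPolynomial.comp Polynomial.C).toAlgebra

@[simp] lemma algebraMap_apply (c : k) :
    algebraMap k (QuotModel k a) c = ⟨Polynomial.C c, 0, 0, 0⟩ := rfl

lemma eq_of_mul_eq_zero {u : QuotModel k a} (h : u * ⟨0, 0, 0, 1⟩ = 0) :
    u = ⟨0, u.q, 0, 0⟩ := by
  simp only [mul_def, zero_def, QuotModel.mk.injEq] at h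
  obtain ⟨-, hq, hr, hp⟩ := h
  have hs : u.s = 0 := Polynomial.isRegular_X.left (by simpa using hr)
  have hr : u.r = 0 := Polynomial.isRegular_X.left (by simpa [hs] using hq)
  ext : 1 <;> simp_all

end QuotModel


variable (k : Type*) [CommRing k] (a : k)

def idealIIIc : Ideal (MvPolynomial (Fin 4) k) :=
  Ideal.span {X 0 ^ 2, X 0 * X 2, X 0 * X 3, X 0 * X 1 - X 2 * X 3, X 2 ^ 2,
    C a * X 0 * X 1 + X 1 * X 2 - X 3 ^ 2}

def toQuotModel : MvPolynomial (Fin 4) k →ₐ[k] QuotModel k a :=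
  aeval ![⟨0, 1, 0, 0⟩, ⟨Polynomial.X, 0, 0, 0⟩, ⟨0, 0, 1, 0⟩, ⟨0, 0, 0, 1⟩]

variable {k a}

lemma idealIIIc_le_ker_toQuotModel : idealIIIc k a ≤ RingHom.ker (toQuotModel k a) := by
  rw [idealIIIc, Ideal.span_le]
  rintro g hg
  simp only [Set.mem_insert_iff, Set.mem_singleton_iff] at hg
  rcases hg with rfl | rfl | rfl | rfl | rfl | rfl <;>
    · simp only [SetLike.mem_coe, RingHom.mem_ker, toQuotModel, map_add, map_sub, map_mul,
        aeval_X, aeval_C, pow_two]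
      ext : 1 <;> simp

def QuotModel.toMvPolynomial (u : QuotModel k a) : MvPolynomial (Fin 4) k :=
  Polynomial.aeval (X 1) u.p + Polynomial.aeval (X 1) u.q * X 0
    + Polynomial.aeval (X 1) u.r * X 2 + Polynomial.aeval (X 1) u.s * X 3

lemma QuotModel.toMvPolynomial_mul_sub_mem (u v : QuotModel k a) :
    u.toMvPolynomial * v.toMvPolynomial - (u * v).toMvPolynomial ∈ idealIIIc k a := by
  set e : Polynomial k →ₐ[k] MvPolynomial (Fin 4) k := Polynomial.aeval (X 1)
  have key : u.toMvPolynomial * v.toMvPolynomial - (u * v).toMvPolynomial =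
      e (u.q * v.q) * X 0 ^ 2 + e (u.q * v.r + u.r * v.q) * (X 0 * X 2)
        + e (u.q * v.s + u.s * v.q) * (X 0 * X 3)
        - e (u.r * v.s + u.s * v.r) * (X 0 * X 1 - X 2 * X 3) + e (u.r * v.r) * X 2 ^ 2
        - e (u.s * v.s) * (C a * X 0 * X 1 + X 1 * X 2 - X 3 ^ 2) := by
    simp only [QuotModel.toMvPolynomial, QuotModel.mul_def, map_add, map_mul, e,
      Polynomial.aeval_X, Polynomial.aeval_C, algebraMap_eq]
    ring
  rw [key]
  refine sub_mem (add_mem (sub_mem (add_mem (add_mem ?_ ?_) ?_) ?_) ?_) ?_ <;>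
    exact Ideal.mul_mem_left _ _ (Ideal.subset_span (by simp))

def QuotModel.toQuotient : QuotModel k a →+* MvPolynomial (Fin 4) k ⧸ idealIIIc k a where
  toFun u := Ideal.Quotient.mk _ u.toMvPolynomial
  map_one' := by simp [QuotModel.toMvPolynomial]
  map_mul' u v := by
    rw [← map_mul, eq_comm, Ideal.Quotient.eq]
    exact QuotModel.toMvPolynomial_mul_sub_mem u v
  map_zero' := by simp [QuotModel.toMvPolynomial]
  map_add' u v := by
    rw [← map_add]
    congr 1
    simp only [QuotModel.toMvPolynomial, QuotModel.add_def, map_add]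
    ring

lemma QuotModel.toQuotient_comp_toQuotModel :
    QuotModel.toQuotient.comp (toQuotModel k a : MvPolynomial (Fin 4) k →+* QuotModel k a) =
      Ideal.Quotient.mk (idealIIIc k a) := by
  refine MvPolynomial.ringHom_ext (fun c => ?_) (fun i => ?_)
  · simp [toQuotModel, QuotModel.toQuotient, QuotModel.toMvPolynomial]
  · fin_cases i <;> simp [toQuotModel, QuotModel.toQuotient, QuotModel.toMvPolynomial]

lemma X0_mul_X3_mem_idealIIIc : X 0 * X 3 ∈ idealIIIc k a :=
  Ideal.subset_span (by simp)

lemma mem_sup_span_X0_of_mul_X3_mem {f : MvPolynomial (Fin 4) k} (hf : f * X 3 ∈ idealIIIc k a) :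
    f ∈ idealIIIc k a ⊔ Ideal.span {X 0} := by
  set q := (toQuotModel k a f).q
  have hq : toQuotModel k a f = ⟨0, q, 0, 0⟩ := QuotModel.eq_of_mul_eq_zero <| by
    simpa [toQuotModel] using idealIIIc_le_ker_toQuotModel hf
  have hsub : f - Polynomial.aeval (X 1) q * X 0 ∈ idealIIIc k a := by
    rw [← Ideal.Quotient.eq, ← RingHom.congr_fun QuotModel.toQuotient_comp_toQuotModel f]
    simp [hq, QuotModel.toQuotient, QuotModel.toMvPolynomial]
  rw [← sub_add_cancel f (Polynomial.aeval (X 1) q * X 0)]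
  exact Ideal.add_mem _ (Ideal.mem_sup_left hsub)
    (Ideal.mem_sup_right (Ideal.mul_mem_left _ _ (Ideal.mem_span_singleton_self _)))

lemma idealIIIc_colon_span_X3 :
    (idealIIIc k a).colon (Ideal.span {(X 3 : MvPolynomial (Fin 4) k)}) =
      idealIIIc k a ⊔ Ideal.span {X 0} := by
  refine le_antisymm (fun f hf => mem_sup_span_X0_of_mul_X3_mem
    (Ideal.mem_colon_span_singleton.mp hf)) (sup_le (fun f hf => ?_) ?_)
  · exact Ideal.mem_colon_span_singleton.mpr (Ideal.mul_mem_right _ _ hf)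
  · rw [Ideal.span_le, Set.singleton_subset_iff]
    exact Ideal.mem_colon_span_singleton.mpr X0_mul_X3_mem_idealIIIc

end

/-- case IIIc: memberships `zw², (w²−yz)w, w⁴ ∈ J` and `J : (w) = J + (x)`. -/
theorem stmt_15 (k : Type*) [Field k] (a : k) :
    let x : MvPolynomial (Fin 4) k := X 0
    let y : MvPolynomial (Fin 4) k := X 1
    let z : MvPolynomial (Fin 4) k := X 2
    let w : MvPolynomial (Fin 4) k := X 3
    let J : Ideal (MvPolynomial (Fin 4) k) :=
      Ideal.span {x ^ 2, x * z, x * w, x * y - z * w, z ^ 2,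
                  C a * x * y + y * z - w ^ 2}
    z * w ^ 2 ∈ J ∧ (w ^ 2 - y * z) * w ∈ J ∧ w ^ 4 ∈ J ∧
      J.colon (Ideal.span {w}) = J ⊔ Ideal.span {x} := by
  intro x y z w J
  have hxw : x * w ∈ J := Ideal.subset_span (by simp)
  have hxy : x * y - z * w ∈ J := Ideal.subset_span (by simp)
  have hw2 : C a * x * y + y * z - w ^ 2 ∈ J := Ideal.subset_span (by simp)
  have hzw2 : z * w ^ 2 ∈ J := by
    rw [show z * w ^ 2 = y * (x * w) - w * (x * y - z * w) by ring]
    exact J.sub_mem (J.mul_mem_left _ hxw) (J.mul_mem_left _ hxy)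
  refine ⟨hzw2, ?_, ?_, idealIIIc_colon_span_X3⟩
  · rw [show (w ^ 2 - y * z) * w = C a * y * (x * w) - w * (C a * x * y + y * z - w ^ 2) by ring]
    exact J.sub_mem (J.mul_mem_left _ hxw) (J.mul_mem_left _ hw2)
  · rw [show w ^ 4 = C a * y * w * (x * w) + y * (z * w ^ 2)
        - w ^ 2 * (C a * x * y + y * z - w ^ 2) by ring]
    exact J.sub_mem (J.add_mem (J.mul_mem_left _ hxw) (J.mul_mem_left _ hzw2))
      (J.mul_mem_left _ hw2)
end

section
/- Let k be a field and Q = k[x,y,z,w]. For the monomial ideal J = (xy, xz, xw, y², yw, zw), the colon ideal satisfies J : (−yz²−z³+w³) = J + (x). -/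
open MvPolynomial Finsupp

private lemma nle4 {i : Fin 4} {a b : Fin 4 →₀ ℕ} (h : b i < a i) : ¬ a ≤ b :=
  fun hle => absurd (Finsupp.le_def.mp hle i) (not_le.mpr h)

set_option maxHeartbeats 1600000 in
/-- case IVb, cusp singularity: `J : (−yz²−z³+w³) = J + (x)`. -/
theorem stmt_16 (k : Type*) [Field k] :
    let x : MvPolynomial (Fin 4) k := X 0
    let y : MvPolynomial (Fin 4) k := X 1
    let z : MvPolynomial (Fin 4) k := X 2
    let w : MvPolynomial (Fin 4) k := X 3
    let J : Ideal (MvPolynomial (Fin 4) k) :=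
      Ideal.span {x * y, x * z, x * w, y ^ 2, y * w, z * w}
    J.colon (Ideal.span {- (y * z ^ 2) - z ^ 3 + w ^ 3}) = J ⊔ Ideal.span {x} := by
  intro x y z w J
  have hfdef : (- (y * z ^ 2) - z ^ 3 + w ^ 3 : MvPolynomial (Fin 4) k)
      = - (y * z ^ 2) - z ^ 3 + w ^ 3 := rfl
  -- monomial forms of the generators
  have e1 : x * y = monomial (single 0 1 + single 1 1) (1:k) := by
    simp [x, y, X, monomial_mul]
  have e2 : x * z = monomial (single 0 1 + single 2 1) (1:k) := by
    simp [x, z, X, monomial_mul]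
  have e3 : x * w = monomial (single 0 1 + single 3 1) (1:k) := by
    simp [x, w, X, monomial_mul]
  have e4 : y ^ 2 = monomial (single 1 2) (1:k) := by
    simp [y, X_pow_eq_monomial]
  have e5 : y * w = monomial (single 1 1 + single 3 1) (1:k) := by
    simp [y, w, X, monomial_mul]
  have e6 : z * w = monomial (single 2 1 + single 3 1) (1:k) := by
    simp [z, w, X, monomial_mul]
  have e0 : x = monomial (single 0 1) (1:k) := by simp [x, X]
  have hJ : J = Ideal.span ((fun s => monomial s (1:k)) ''
      ({single 0 1 + single 1 1, single 0 1 + single 2 1, single 0 1 + single 3 1,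
        single 1 2, single 1 1 + single 3 1, single 2 1 + single 3 1} : Set (Fin 4 →₀ ℕ))) := by
    show Ideal.span _ = _
    rw [Set.image_insert_eq, Set.image_insert_eq, Set.image_insert_eq, Set.image_insert_eq,
      Set.image_insert_eq, Set.image_singleton]
    rw [← e1, ← e2, ← e3, ← e4, ← e5, ← e6]
  have hJx : J ⊔ Ideal.span {x} = Ideal.span ((fun s => monomial s (1:k)) ''
      ({single 0 1, single 0 1 + single 1 1, single 0 1 + single 2 1, single 0 1 + single 3 1,
        single 1 2, single 1 1 + single 3 1, single 2 1 + single 3 1} : Set (Fin 4 →₀ ℕ))) := by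
    rw [Set.image_insert_eq, Set.image_insert_eq, Set.image_insert_eq, Set.image_insert_eq,
      Set.image_insert_eq, Set.image_insert_eq, Set.image_singleton]
    rw [← e0, ← e1, ← e2, ← e3, ← e4, ← e5, ← e6]
    rw [Ideal.span_insert, sup_comm]
  -- monomial form of f
  have mono_neg : ∀ m : Fin 4 →₀ ℕ, (monomial m (-1:k)) = -(monomial m 1) := by
    intro m; simpa using map_neg (monomial m) (1:k)
  have hf : (- (y * z ^ 2) - z ^ 3 + w ^ 3 : MvPolynomial (Fin 4) k)
      = monomial (single 1 1 + single 2 2) (-1:k)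
        + monomial (single 2 3) (-1:k) + monomial (single 3 3) (1:k) := by
    have h1 : y * z ^ 2 = monomial (single 1 1 + single 2 2) (1:k) := by
      rw [show (z:MvPolynomial (Fin 4) k)^2 = monomial (single 2 2) 1 from
        X_pow_eq_monomial ..]
      simp [y, X, monomial_mul]
    have h2 : (z:MvPolynomial (Fin 4) k) ^ 3 = monomial (single 2 3) (1:k) :=
      X_pow_eq_monomial ..
    have h3 : (w:MvPolynomial (Fin 4) k) ^ 3 = monomial (single 3 3) (1:k) :=
      X_pow_eq_monomial ..
    rw [h1, h2, h3, mono_neg, mono_neg]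
    ring
  have key : ∀ (g : MvPolynomial (Fin 4) k) (β : Fin 4 →₀ ℕ),
      coeff β (g * (- (y * z ^ 2) - z ^ 3 + w ^ 3))
        = (if single 1 1 + single 2 2 ≤ β then -coeff (β - (single 1 1 + single 2 2)) g else 0)
        + (if single 2 3 ≤ β then -coeff (β - single 2 3) g else 0)
        + (if (single 3 3 : Fin 4 →₀ ℕ) ≤ β then coeff (β - single 3 3) g else 0) := by
    intro g β
    rw [hf, mul_add, mul_add, coeff_add, coeff_add,
      coeff_mul_monomial', coeff_mul_monomial', coeff_mul_monomial']
    split_ifs <;> ring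
  apply le_antisymm
  · -- hard direction
    intro g hg
    rw [Ideal.mem_colon_span_singleton] at hg
    rw [hJ, mem_ideal_span_monomial_image] at hg
    rw [hJx, mem_ideal_span_monomial_image]
    -- coefficients of g*f vanish at monomials not in J
    have hzero : ∀ β : Fin 4 →₀ ℕ,
        ¬ (single 0 1 + single 1 1 ≤ β) → ¬ (single 0 1 + single 2 1 ≤ β) →
        ¬ (single 0 1 + single 3 1 ≤ β) → ¬ ((single 1 2 : Fin 4 →₀ ℕ) ≤ β) →
        ¬ (single 1 1 + single 3 1 ≤ β) → ¬ (single 2 1 + single 3 1 ≤ β) →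
        coeff β (g * (- (y * z ^ 2) - z ^ 3 + w ^ 3)) = 0 := by
      intro β h1 h2 h3 h4 h5 h6
      by_contra hne
      obtain ⟨s, hs, hle⟩ := hg β (MvPolynomial.mem_support_iff.mpr hne)
      simp only [Set.mem_insert_iff, Set.mem_singleton_iff] at hs
      rcases hs with rfl|rfl|rfl|rfl|rfl|rfl <;> tauto
    -- z-powers: coeff of g at z^c vanishes
    have hA : ∀ c : ℕ, coeff (single 2 c) g = 0 := by
      intro c
      have h0 : coeff (single 2 (c+3)) (g * (- (y * z ^ 2) - z ^ 3 + w ^ 3)) = 0 := by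
        refine hzero _ (nle4 (i := 0) ?_) (nle4 (i := 0) ?_) (nle4 (i := 0) ?_)
          (nle4 (i := 1) ?_) (nle4 (i := 1) ?_) (nle4 (i := 3) ?_) <;>
          simp [Finsupp.single_apply]
      rw [key] at h0
      rw [if_neg (nle4 (i := 1) (by simp [Finsupp.single_apply]))] at h0
      rw [if_pos (Finsupp.le_def.mpr (fun i => by
        fin_cases i <;> simp [Finsupp.single_apply]))] at h0
      rw [if_neg (nle4 (i := 3) (by simp [Finsupp.single_apply]))] at h0
      rw [show (single 2 (c+3) : Fin 4 →₀ ℕ) - single 2 3 = single 2 c by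
        ext i; fin_cases i <;> simp [Finsupp.tsub_apply, Finsupp.single_apply]] at h0
      simpa using h0
    -- w-powers
    have hB : ∀ d : ℕ, coeff (single 3 d) g = 0 := by
      intro d
      have h0 : coeff (single 3 (d+3)) (g * (- (y * z ^ 2) - z ^ 3 + w ^ 3)) = 0 := by
        refine hzero _ (nle4 (i := 0) ?_) (nle4 (i := 0) ?_) (nle4 (i := 0) ?_)
          (nle4 (i := 1) ?_) (nle4 (i := 1) ?_) (nle4 (i := 2) ?_) <;>
          simp [Finsupp.single_apply]
      rw [key] at h0
      rw [if_neg (nle4 (i := 1) (by simp [Finsupp.single_apply]))] at h0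
      rw [if_neg (nle4 (i := 2) (by simp [Finsupp.single_apply]))] at h0
      rw [if_pos (Finsupp.le_def.mpr (fun i => by
        fin_cases i <;> simp [Finsupp.single_apply]))] at h0
      rw [show (single 3 (d+3) : Fin 4 →₀ ℕ) - single 3 3 = single 3 d by
        ext i; fin_cases i <;> simp [Finsupp.tsub_apply, Finsupp.single_apply]] at h0
      simpa using h0
    -- y·z^c
    have hC : ∀ c : ℕ, coeff (single 1 1 + single 2 c) g = 0 := by
      intro c
      have h0 : coeff (single 1 1 + single 2 (c+3))
          (g * (- (y * z ^ 2) - z ^ 3 + w ^ 3)) = 0 := by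
        refine hzero _ (nle4 (i := 0) ?_) (nle4 (i := 0) ?_) (nle4 (i := 0) ?_)
          (nle4 (i := 1) ?_) (nle4 (i := 3) ?_) (nle4 (i := 3) ?_) <;>
          simp [Finsupp.single_apply]
      rw [key] at h0
      rw [if_pos (Finsupp.le_def.mpr (fun i => by
        fin_cases i <;> simp [Finsupp.single_apply]))] at h0
      rw [if_pos (Finsupp.le_def.mpr (fun i => by
        fin_cases i <;> simp [Finsupp.single_apply]))] at h0
      rw [if_neg (nle4 (i := 3) (by simp [Finsupp.single_apply]))] at h0
      rw [show (single 1 1 + single 2 (c+3) : Fin 4 →₀ ℕ) - (single 1 1 + single 2 2)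
          = single 2 (c+1) by
        ext i; fin_cases i <;> simp [Finsupp.tsub_apply, Finsupp.single_apply]] at h0
      rw [show (single 1 1 + single 2 (c+3) : Fin 4 →₀ ℕ) - single 2 3
          = single 1 1 + single 2 c by
        ext i; fin_cases i <;> simp [Finsupp.tsub_apply, Finsupp.single_apply]] at h0
      rw [hA (c+1)] at h0
      simpa using h0
    -- classify monomials of g
    intro α hα
    by_cases h0 : 1 ≤ α 0
    · exact ⟨single 0 1, by simp, Finsupp.le_def.mpr (fun i => by
        fin_cases i <;> simp [Finsupp.single_apply] <;> omega)⟩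
    push_neg at h0
    have hα0 : α 0 = 0 := by omega
    by_cases h14 : 2 ≤ α 1
    · exact ⟨single 1 2, by simp, Finsupp.le_def.mpr (fun i => by
        fin_cases i <;> simp [Finsupp.single_apply] <;> omega)⟩
    push_neg at h14
    by_cases h3 : 1 ≤ α 3
    · by_cases h1 : 1 ≤ α 1
      · exact ⟨single 1 1 + single 3 1, by simp, Finsupp.le_def.mpr (fun i => by
          fin_cases i <;> simp [Finsupp.single_apply] <;> omega)⟩
      · by_cases h2 : 1 ≤ α 2
        · exact ⟨single 2 1 + single 3 1, by simp, Finsupp.le_def.mpr (fun i => by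
            fin_cases i <;> simp [Finsupp.single_apply] <;> omega)⟩
        · push_neg at h1 h2
          exfalso
          have hαe : α = single 3 (α 3) := by
            ext i; fin_cases i <;> simp [Finsupp.single_apply] <;> omega
          exact absurd (hαe ▸ hB (α 3)) (MvPolynomial.mem_support_iff.mp hα)
    · push_neg at h3
      exfalso
      have h14' : α 1 = 0 ∨ α 1 = 1 := by omega
      rcases h14' with h1 | h1
      · have hαe : α = single 2 (α 2) := by
          ext i; fin_cases i <;> simp [Finsupp.single_apply] <;> omega
        exact absurd (hαe ▸ hA (α 2)) (MvPolynomial.mem_support_iff.mp hα)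
      · have hαe : α = single 1 1 + single 2 (α 2) := by
          ext i; fin_cases i <;> simp [Finsupp.single_apply] <;> omega
        exact absurd (hαe ▸ hC (α 2)) (MvPolynomial.mem_support_iff.mp hα)
  · -- easy direction
    rw [sup_le_iff]
    constructor
    · intro g hgJ
      rw [Ideal.mem_colon_span_singleton]
      exact Ideal.mul_mem_right _ _ hgJ
    · rw [Ideal.span_le, Set.singleton_subset_iff]
      rw [SetLike.mem_coe, Ideal.mem_colon_span_singleton]
      rw [show x * (- (y * z ^ 2) - z ^ 3 + w ^ 3)
          = (-z^2) * (x*y) + (-z^2) * (x*z) + w^2 * (x*w) by ring]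
      refine Ideal.add_mem _ (Ideal.add_mem _ ?_ ?_) ?_
      · exact Ideal.mul_mem_left _ _ (Ideal.subset_span
          (by simp only [Set.mem_insert_iff, Set.mem_singleton_iff]; tauto))
      · exact Ideal.mul_mem_left _ _ (Ideal.subset_span
          (by simp only [Set.mem_insert_iff, Set.mem_singleton_iff]; tauto))
      · exact Ideal.mul_mem_left _ _ (Ideal.subset_span
          (by simp only [Set.mem_insert_iff, Set.mem_singleton_iff]
              tauto))
end

section
/- Let k be a field and Q = k[x,y,z,w]. For J = (xy, xz, xw, yz−w², z², zw), the colon ideal satisfies J : (y) = J + (x). -/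
open MvPolynomial

namespace Stmt17

variable (k : Type*) [Field k]

lemma aeval_CC {A : Type*} [CommRing A] [Algebra k A] (a : A) (p : Polynomial k) :
    Polynomial.aeval (Polynomial.C a) p = Polynomial.C (Polynomial.aeval a p) :=
  Polynomial.aeval_algHom_apply (Polynomial.CAlgHom (R := k) (A := A)) a p

noncomputable def φ : MvPolynomial (Fin 4) k →ₐ[k] MvPolynomial (Fin 4) k :=
  aeval ![0, X 1, X 1 * X 0 ^ 2, X 1 * X 0]

lemma φ0 : φ k (X 0) = 0 := by simp [φ]
lemma φ1 : φ k (X 1) = X 1 := by simp [φ]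
lemma φ2 : φ k (X 2) = X 1 * X 0 ^ 2 := by simp [φ]
lemma φ3 : φ k (X 3) = X 1 * X 0 := by simp [φ]
lemma φC (c : k) : φ k (C c) = C c := by simp [φ, algebraMap_eq]
lemma φP (p : Polynomial k) :
    φ k (Polynomial.aeval (X 1) p) = Polynomial.aeval (X 1) p := by
  rw [← Polynomial.aeval_algHom_apply, φ1]

noncomputable def χ : MvPolynomial (Fin 3) k →ₐ[k] Polynomial k :=
  aeval (fun i : Fin 3 => if i = 0 then Polynomial.X else 0)

lemma χ0 : χ k (X 0) = Polynomial.X := by simp [χ]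
lemma χC (c : k) : χ k (C c) = Polynomial.C c := by simp [χ, algebraMap_eq, Polynomial.algebraMap_eq]
lemma χA (p : Polynomial k) : χ k (Polynomial.aeval (X 0) p) = p := by
  rw [← Polynomial.aeval_algHom_apply, χ0, Polynomial.aeval_X_left_apply]

lemma decomp (f : MvPolynomial (Fin 4) k) :
    ∃ (c : k) (p q r : Polynomial k) (g : MvPolynomial (Fin 4) k),
      g ∈ Ideal.span ({X 0, X 1 * X 2 - X 3 ^ 2, X 2 ^ 2, X 2 * X 3} :
        Set (MvPolynomial (Fin 4) k)) ∧
      f = C c * X 2 + Polynomial.aeval (X 1) p + Polynomial.aeval (X 1) q * X 3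
        + Polynomial.aeval (X 1) r * X 3 ^ 2 + g := by
  induction f using MvPolynomial.induction_on with
  | C a =>
      exact ⟨0, Polynomial.C a, 0, 0, 0, Ideal.zero_mem _, by
        simp [algebraMap_eq]⟩
  | add f₁ f₂ h₁ h₂ =>
      obtain ⟨c₁, p₁, q₁, r₁, g₁, hg₁, he₁⟩ := h₁
      obtain ⟨c₂, p₂, q₂, r₂, g₂, hg₂, he₂⟩ := h₂
      refine ⟨c₁ + c₂, p₁ + p₂, q₁ + q₂, r₁ + r₂, g₁ + g₂, add_mem hg₁ hg₂, ?_⟩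
      rw [he₁, he₂]
      simp only [map_add]
      ring
  | mul_X f i ih =>
      obtain ⟨c, p, q, r, g, hg, he⟩ := ih
      have m0 : (X 0 : MvPolynomial (Fin 4) k) ∈
          Ideal.span ({X 0, X 1 * X 2 - X 3 ^ 2, X 2 ^ 2, X 2 * X 3} :
            Set (MvPolynomial (Fin 4) k)) := Ideal.subset_span (by simp)
      have m1 : (X 1 * X 2 - X 3 ^ 2 : MvPolynomial (Fin 4) k) ∈
          Ideal.span ({X 0, X 1 * X 2 - X 3 ^ 2, X 2 ^ 2, X 2 * X 3} :
            Set (MvPolynomial (Fin 4) k)) := Ideal.subset_span (by simp)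
      have m2 : (X 2 ^ 2 : MvPolynomial (Fin 4) k) ∈
          Ideal.span ({X 0, X 1 * X 2 - X 3 ^ 2, X 2 ^ 2, X 2 * X 3} :
            Set (MvPolynomial (Fin 4) k)) := Ideal.subset_span (by simp)
      have m3 : (X 2 * X 3 : MvPolynomial (Fin 4) k) ∈
          Ideal.span ({X 0, X 1 * X 2 - X 3 ^ 2, X 2 ^ 2, X 2 * X 3} :
            Set (MvPolynomial (Fin 4) k)) := Ideal.subset_span (by simp)
      fin_cases i
      · -- multiply by x
        exact ⟨0, 0, 0, 0, f * X 0, Ideal.mul_mem_left _ f m0, by simp⟩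
      · -- multiply by y
        refine ⟨0, p * Polynomial.X, q * Polynomial.X, r * Polynomial.X + Polynomial.C c,
          C c * (X 1 * X 2 - X 3 ^ 2) + g * X 1,
          add_mem (Ideal.mul_mem_left _ _ m1) (Ideal.mul_mem_right _ _ hg), ?_⟩
        rw [he, show (⟨1, by omega⟩ : Fin 4) = (1 : Fin 4) from rfl]
        simp only [map_add, map_mul, Polynomial.aeval_X, Polynomial.aeval_C, algebraMap_eq,
          map_zero]
        ring
      · -- multiply by z
        have hp : (Polynomial.aeval (X 1 : MvPolynomial (Fin 4) k)) p
            = X 1 * Polynomial.aeval (X 1) p.divX + C (p.coeff 0) := by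
          conv_lhs => rw [← Polynomial.X_mul_divX_add p]
          simp only [map_add, map_mul, Polynomial.aeval_X, Polynomial.aeval_C, algebraMap_eq]
        refine ⟨p.coeff 0, 0, 0, p.divX,
          C c * X 2 ^ 2 + Polynomial.aeval (X 1) q * (X 2 * X 3)
            + Polynomial.aeval (X 1) r * X 3 * (X 2 * X 3)
            + Polynomial.aeval (X 1) p.divX * (X 1 * X 2 - X 3 ^ 2) + g * X 2,
          add_mem (add_mem (add_mem (add_mem (Ideal.mul_mem_left _ _ m2)
            (Ideal.mul_mem_left _ _ m3)) (Ideal.mul_mem_left _ _ m3))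
            (Ideal.mul_mem_left _ _ m1)) (Ideal.mul_mem_right _ _ hg), ?_⟩
        rw [he, hp, show (⟨2, by omega⟩ : Fin 4) = (2 : Fin 4) from rfl]
        simp only [map_zero, zero_mul, add_zero, zero_add]
        ring
      · -- multiply by w
        refine ⟨0, 0, p, q,
          C c * (X 2 * X 3)
            + (Polynomial.aeval (X 1) r * X 1 * (X 2 * X 3)
               - Polynomial.aeval (X 1) r * X 3 * (X 1 * X 2 - X 3 ^ 2))
            + g * X 3,
          add_mem (add_mem (Ideal.mul_mem_left _ _ m3)
            (sub_mem (Ideal.mul_mem_left _ _ m3) (Ideal.mul_mem_left _ _ m1)))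
            (Ideal.mul_mem_right _ _ hg), ?_⟩
        rw [he, show (⟨3, by omega⟩ : Fin 4) = (3 : Fin 4) from rfl]
        simp only [map_zero, zero_mul, add_zero, zero_add, map_mul]
        ring


lemma key (f : MvPolynomial (Fin 4) k)
    (hf : f * X 1 ∈ Ideal.span ({X 0 * X 1, X 0 * X 2, X 0 * X 3, X 1 * X 2 - X 3 ^ 2,
      X 2 ^ 2, X 2 * X 3} : Set (MvPolynomial (Fin 4) k))) :
    f ∈ Ideal.span ({X 0 * X 1, X 0 * X 2, X 0 * X 3, X 1 * X 2 - X 3 ^ 2,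
      X 2 ^ 2, X 2 * X 3} : Set (MvPolynomial (Fin 4) k)) ⊔ Ideal.span {X 0} := by
  -- Step 1: images of the generators of J under φ lie in (x^3)
  have hJmap : ∀ t ∈ Ideal.span ({X 0 * X 1, X 0 * X 2, X 0 * X 3, X 1 * X 2 - X 3 ^ 2,
      X 2 ^ 2, X 2 * X 3} : Set (MvPolynomial (Fin 4) k)),
      φ k t ∈ Ideal.span {(X 0 : MvPolynomial (Fin 4) k) ^ 3} := by
    intro t ht
    have h1 : φ k t ∈ Ideal.map (φ k) (Ideal.span _) := Ideal.mem_map_of_mem _ ht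
    rw [Ideal.map_span] at h1
    refine Ideal.span_le.mpr ?_ h1
    rintro _ ⟨a, ha, rfl⟩
    simp only [Set.mem_insert_iff, Set.mem_singleton_iff] at ha
    rcases ha with rfl | rfl | rfl | rfl | rfl | rfl <;>
        rw [SetLike.mem_coe, Ideal.mem_span_singleton] <;>
        simp only [map_mul, map_sub, map_pow, φ0, φ1, φ2, φ3]
    · exact ⟨0, by ring⟩
    · exact ⟨0, by ring⟩
    · exact ⟨0, by ring⟩
    · exact ⟨0, by ring⟩
    · exact ⟨X 0 * X 1 ^ 2, by ring⟩
    · exact ⟨X 1 ^ 2, by ring⟩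
  have hKmap : ∀ t ∈ Ideal.span ({X 0, X 1 * X 2 - X 3 ^ 2, X 2 ^ 2, X 2 * X 3} :
      Set (MvPolynomial (Fin 4) k)),
      φ k t ∈ Ideal.span {(X 0 : MvPolynomial (Fin 4) k) ^ 3} := by
    intro t ht
    have h1 : φ k t ∈ Ideal.map (φ k) (Ideal.span _) := Ideal.mem_map_of_mem _ ht
    rw [Ideal.map_span] at h1
    refine Ideal.span_le.mpr ?_ h1
    rintro _ ⟨a, ha, rfl⟩
    simp only [Set.mem_insert_iff, Set.mem_singleton_iff] at ha
    rcases ha with rfl | rfl | rfl | rfl <;>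
        rw [SetLike.mem_coe, Ideal.mem_span_singleton] <;>
        simp only [map_mul, map_sub, map_pow, φ0, φ1, φ2, φ3]
    · exact ⟨0, by ring⟩
    · exact ⟨0, by ring⟩
    · exact ⟨X 0 * X 1 ^ 2, by ring⟩
    · exact ⟨X 1 ^ 2, by ring⟩
  obtain ⟨c, p, q, r, g, hg, he⟩ := decomp k f
  have hφg : (X 0 : MvPolynomial (Fin 4) k) ^ 3 ∣ φ k g :=
    Ideal.mem_span_singleton.mp (hKmap g hg)
  have hφfy : (X 0 : MvPolynomial (Fin 4) k) ^ 3 ∣ φ k f * X 1 := by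
    have := Ideal.mem_span_singleton.mp (hJmap _ hf)
    rwa [map_mul, φ1] at this
  have hφf : φ k f = (C c * (X 1 * X 0 ^ 2) + Polynomial.aeval (X 1) p
      + Polynomial.aeval (X 1) q * (X 1 * X 0)
      + Polynomial.aeval (X 1) r * (X 1 * X 0) ^ 2) + φ k g := by
    rw [he]
    simp only [map_add, map_mul, map_pow, φ1, φ2, φ3, φC, φP]
  have hE : (X 0 : MvPolynomial (Fin 4) k) ^ 3 ∣
      (C c * (X 1 * X 0 ^ 2) + Polynomial.aeval (X 1) p
      + Polynomial.aeval (X 1) q * (X 1 * X 0)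
      + Polynomial.aeval (X 1) r * (X 1 * X 0) ^ 2) * X 1 := by
    have heq : (C c * (X 1 * X 0 ^ 2) + Polynomial.aeval (X 1) p
        + Polynomial.aeval (X 1) q * (X 1 * X 0)
        + Polynomial.aeval (X 1) r * (X 1 * X 0) ^ 2) * X 1
        = φ k f * X 1 - φ k g * X 1 := by rw [hφf]; ring
    rw [heq]
    exact dvd_sub hφfy (hφg.mul_right _)
  -- Step 2: move to Polynomial (MvPolynomial (Fin 3) k)
  have h0e : (finSuccEquiv k 3) (X 0) = Polynomial.X := finSuccEquiv_X_zero
  have h1e : (finSuccEquiv k 3) (X 1) = Polynomial.C (X 0) := by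
    rw [show (X 1 : MvPolynomial (Fin 4) k) = X (Fin.succ 0) from rfl, finSuccEquiv_X_succ]
  have hCe : ∀ a : k, (finSuccEquiv k 3) (C a) = Polynomial.C (C a) := by
    intro a
    rw [show (C a : MvPolynomial (Fin 4) k) = algebraMap k _ a from rfl]
    rw [AlgEquiv.commutes]
    simp [algebraMap_eq, Polynomial.algebraMap_eq]
  have hPe : ∀ s : Polynomial k, (finSuccEquiv k 3) (Polynomial.aeval (X 1) s)
      = Polynomial.C (Polynomial.aeval (X 0) s) := by
    intro s
    rw [← Polynomial.aeval_algHom_apply, h1e, aeval_CC]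
  have hdvd2 : (Polynomial.X : Polynomial (MvPolynomial (Fin 3) k)) ^ 3 ∣
      (Polynomial.C (C c) * (Polynomial.C (X 0) * Polynomial.X ^ 2)
        + Polynomial.C (Polynomial.aeval (X 0) p)
        + Polynomial.C (Polynomial.aeval (X 0) q) * (Polynomial.C (X 0) * Polynomial.X)
        + Polynomial.C (Polynomial.aeval (X 0) r) * (Polynomial.C (X 0) * Polynomial.X) ^ 2)
        * Polynomial.C (X 0) := by
    have h := map_dvd (finSuccEquiv k 3) hE
    rw [map_pow, h0e] at h
    simpa only [map_mul, map_add, map_pow, h0e, h1e, hCe, hPe] using h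
  have hnd : ¬ (Polynomial.X : Polynomial (MvPolynomial (Fin 3) k)) ∣ Polynomial.C (X 0) := by
    rintro ⟨t, ht⟩
    have h2 := congrArg (Polynomial.eval 0) ht
    simp only [Polynomial.eval_C, Polynomial.eval_mul, Polynomial.eval_X, zero_mul] at h2
    exact X_ne_zero _ h2
  have hF := (Polynomial.prime_X).pow_dvd_of_dvd_mul_right 3 hnd hdvd2
  obtain ⟨t, ht⟩ := hF
  -- Extract p = 0
  have hp0 : Polynomial.aeval (X 0 : MvPolynomial (Fin 3) k) p = 0 := by
    have h2 := congrArg (Polynomial.eval 0) ht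
    simpa using h2
  have hp : p = 0 := by
    have h2 := χA k p
    rw [hp0, map_zero] at h2
    exact h2.symm
  rw [hp0, map_zero, add_zero] at ht
  -- cancel one X
  have ht2 : (Polynomial.X : Polynomial (MvPolynomial (Fin 3) k)) *
      (Polynomial.C (C c) * Polynomial.C (X 0) * Polynomial.X
        + Polynomial.C (Polynomial.aeval (X 0) q) * Polynomial.C (X 0)
        + Polynomial.C (Polynomial.aeval (X 0) r) * Polynomial.C (X 0) ^ 2 * Polynomial.X)
      = Polynomial.X * (Polynomial.X ^ 2 * t) := by linear_combination ht
  have ht3 := mul_left_cancel₀ Polynomial.X_ne_zero ht2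
  -- Extract q = 0
  have hq0 : Polynomial.aeval (X 0 : MvPolynomial (Fin 3) k) q * X 0 = 0 := by
    have h2 := congrArg (Polynomial.eval 0) ht3
    simpa using h2
  have hq0' : Polynomial.aeval (X 0 : MvPolynomial (Fin 3) k) q = 0 :=
    (mul_eq_zero.mp hq0).resolve_right (X_ne_zero _)
  have hq : q = 0 := by
    have h2 := χA k q
    rw [hq0', map_zero] at h2
    exact h2.symm
  rw [hq0', map_zero, zero_mul, add_zero] at ht3
  -- cancel another X
  have ht4 : (Polynomial.X : Polynomial (MvPolynomial (Fin 3) k)) *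
      (Polynomial.C (C c) * Polynomial.C (X 0)
        + Polynomial.C (Polynomial.aeval (X 0) r) * Polynomial.C (X 0) ^ 2)
      = Polynomial.X * (Polynomial.X * t) := by linear_combination ht3
  have ht5 := mul_left_cancel₀ Polynomial.X_ne_zero ht4
  have h2 : (C c : MvPolynomial (Fin 3) k) * X 0
      + Polynomial.aeval (X 0 : MvPolynomial (Fin 3) k) r * X 0 ^ 2 = 0 := by
    have h3 := congrArg (Polynomial.eval 0) ht5
    simpa using h3
  -- move to Polynomial k via χ
  have h3 : Polynomial.C c * Polynomial.X + r * Polynomial.X ^ 2 = 0 := by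
    have h4 := congrArg (χ k) h2
    simpa only [map_add, map_mul, map_pow, map_zero, χ0, χC, χA] using h4
  have hc : c = 0 := by
    have h5 := congrArg (fun s => Polynomial.coeff s 1) h3
    simpa [Polynomial.coeff_mul_X_pow'] using h5
  have hr : r = 0 := by
    rw [hc, map_zero, zero_mul, zero_add] at h3
    rcases mul_eq_zero.mp h3 with h | h
    · exact h
    · exact absurd h (pow_ne_zero _ Polynomial.X_ne_zero)
  -- conclude
  rw [hp, hq, hr, hc] at he
  simp only [map_zero, zero_mul, zero_add, add_zero, C_0] at he
  rw [he]
  refine Ideal.span_le.mpr ?_ hg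
  rintro a ha
  simp only [Set.mem_insert_iff, Set.mem_singleton_iff] at ha
  rcases ha with rfl | rfl | rfl | rfl
  · exact Ideal.mem_sup_right (Ideal.subset_span rfl)
  · exact Ideal.mem_sup_left (Ideal.subset_span (by simp))
  · exact Ideal.mem_sup_left (Ideal.subset_span (by simp))
  · exact Ideal.mem_sup_left (Ideal.subset_span (by simp))

end Stmt17

/-- case IVc, conic and tangent line: `J : (y) = J + (x)`. -/
theorem stmt_17 (k : Type*) [Field k] :
    let x : MvPolynomial (Fin 4) k := X 0
    let y : MvPolynomial (Fin 4) k := X 1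
    let z : MvPolynomial (Fin 4) k := X 2
    let w : MvPolynomial (Fin 4) k := X 3
    let J : Ideal (MvPolynomial (Fin 4) k) :=
      Ideal.span {x * y, x * z, x * w, y * z - w ^ 2, z ^ 2, z * w}
    J.colon (Ideal.span {y}) = J ⊔ Ideal.span {x} := by
  intro x y z w J
  apply le_antisymm
  · intro f hf
    rw [Ideal.mem_colon_span_singleton] at hf
    exact Stmt17.key k f hf
  · refine sup_le ?_ ?_
    · intro f hf
      rw [Ideal.mem_colon_span_singleton]
      exact Ideal.mul_mem_right _ _ hf
    · rw [Ideal.span_le]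
      intro a ha
      rw [Set.mem_singleton_iff] at ha
      subst ha
      rw [SetLike.mem_coe, Ideal.mem_colon_span_singleton]
      exact Ideal.subset_span (by simp)
end

section
/- Let k be a field with char k ≠ 2, 3, and a ∈ k with a² − a + 1 = 0. In Q = k[x,y,z,w], the ideal J = (xy, xz, xw, yw, y²−(a−1)zw−(2a−1)z², (2a−1)zw+(a−1)w²) contains the elements y³−(2a−1)yz², w⁴−3(2a−1)z³w, zw³+3(a−1)z³w, y⁴+(a+1)z³w+3z⁴, and (2a−1)y⁴−zw³+3(2a−1)z⁴, and satisfies J : (z) = J + (x). -/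
open MvPolynomial

set_option maxHeartbeats 4000000 in
/-- case IVa: memberships in `J` and `J : (z) = J + (x)`,
where `a² − a + 1 = 0` and `char k ≠ 2, 3`. -/
theorem stmt_18 (k : Type*) [Field k] (h2 : (2 : k) ≠ 0) (h3 : (3 : k) ≠ 0)
    (a : k) (ha : a ^ 2 - a + 1 = 0) :
    let x : MvPolynomial (Fin 4) k := X 0
    let y : MvPolynomial (Fin 4) k := X 1
    let z : MvPolynomial (Fin 4) k := X 2
    let w : MvPolynomial (Fin 4) k := X 3
    let J : Ideal (MvPolynomial (Fin 4) k) :=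
      Ideal.span {x * y, x * z, x * w, y * w,
                  y ^ 2 - C (a - 1) * z * w - C (2 * a - 1) * z ^ 2,
                  C (2 * a - 1) * z * w + C (a - 1) * w ^ 2}
    y ^ 3 - C (2 * a - 1) * y * z ^ 2 ∈ J ∧
    w ^ 4 - C (3 * (2 * a - 1)) * z ^ 3 * w ∈ J ∧
    z * w ^ 3 + C (3 * (a - 1)) * z ^ 3 * w ∈ J ∧
    y ^ 4 + C (a + 1) * z ^ 3 * w + 3 * z ^ 4 ∈ J ∧
    C (2 * a - 1) * y ^ 4 - z * w ^ 3 + C (3 * (2 * a - 1)) * z ^ 4 ∈ J ∧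
    J.colon (Ideal.span {z}) = J ⊔ Ideal.span {x} := by
  intro x y z w J
  have hC : (C a : MvPolynomial (Fin 4) k) ^ 2 - C a + 1 = 0 := by
    have := congrArg (C : k →+* MvPolynomial (Fin 4) k) ha
    simpa using this
  set A : MvPolynomial (Fin 4) k := C a with hA
  have m4 : y * w ∈ J := Ideal.subset_span (by simp)
  have m5 : y ^ 2 - C (a - 1) * z * w - C (2 * a - 1) * z ^ 2 ∈ J :=
    Ideal.subset_span (by simp)
  have m6 : C (2 * a - 1) * z * w + C (a - 1) * w ^ 2 ∈ J :=
    Ideal.subset_span (by simp)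
  refine ⟨?_, ?_, ?_, ?_, ?_, ?_⟩
  · -- y³ − (2a−1)yz²
    have e : y ^ 3 - C (2 * a - 1) * y * z ^ 2 =
        (C (a - 1) * z) * (y * w) +
        y * (y ^ 2 - C (a - 1) * z * w - C (2 * a - 1) * z ^ 2) := by
      simp only [map_sub, map_mul, map_ofNat, map_one, ← hA]
      ring
    rw [e]
    exact J.add_mem (J.mul_mem_left _ m4) (J.mul_mem_left _ m5)
  · -- w⁴ − 3(2a−1)z³w
    have e : w ^ 4 - C (3 * (2 * a - 1)) * z ^ 3 * w =
        (-A * (w ^ 2 + (A - 2) * z * w + (A - 2) ^ 2 * z ^ 2)) *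
          (C (2 * a - 1) * z * w + C (a - 1) * w ^ 2) := by
      simp only [map_sub, map_mul, map_ofNat, map_one, ← hA]
      linear_combination (2*A^2*z^3*w + A^2*z^2*w^2 - 2*A*z^2*w^2 + A*z*w^3
        - 7*A*z^3*w + w^4 + 3*z^3*w) * hC
    rw [e]
    exact J.mul_mem_left _ m6
  · -- zw³ + 3(a−1)z³w
    have e : z * w ^ 3 + C (3 * (a - 1)) * z ^ 3 * w =
        (-A * z * (w + (A - 2) * z)) *
          (C (2 * a - 1) * z * w + C (a - 1) * w ^ 2) := by
      simp only [map_sub, map_mul, map_ofNat, map_one, ← hA]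
      linear_combination (2*A*z^3*w + A*z^2*w^2 + z*w^3 - 3*z^3*w) * hC
    rw [e]
    exact J.mul_mem_left _ m6
  · -- y⁴ + (a+1)z³w + 3z⁴
    have e : y ^ 4 + C (a + 1) * z ^ 3 * w + 3 * z ^ 4 =
        (y ^ 2 + (A - 1) * z * w + (2 * A - 1) * z ^ 2) *
          (y ^ 2 - C (a - 1) * z * w - C (2 * a - 1) * z ^ 2) +
        ((A - 1) * z ^ 2) *
          (C (2 * a - 1) * z * w + C (a - 1) * w ^ 2) := by
      simp only [map_sub, map_add, map_mul, map_ofNat, map_one, ← hA]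
      linear_combination (2*z^3*w + 4*z^4) * hC
    rw [e]
    exact J.add_mem (J.mul_mem_left _ m5) (J.mul_mem_left _ m6)
  · -- (2a−1)y⁴ − zw³ + 3(2a−1)z⁴
    have e : C (2 * a - 1) * y ^ 4 - z * w ^ 3 + C (3 * (2 * a - 1)) * z ^ 4 =
        ((2 * A - 1) * (y ^ 2 + (A - 1) * z * w + (2 * A - 1) * z ^ 2)) *
          (y ^ 2 - C (a - 1) * z * w - C (2 * a - 1) * z ^ 2) +
        ((2 * A - 1) * (A - 1) * z ^ 2 + A * z * (w + (A - 2) * z)) *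
          (C (2 * a - 1) * z * w + C (a - 1) * w ^ 2) := by
      simp only [map_sub, map_add, map_mul, map_ofNat, map_one, ← hA]
      linear_combination (-A*z^2*w^2 + 2*A*z^3*w + 8*A*z^4 - z^3*w - 4*z^4
        - z*w^3) * hC
    rw [e]
    exact J.add_mem (J.mul_mem_left _ m5) (J.mul_mem_left _ m6)
  · -- the colon computation
    have hxe : x = X 0 := rfl
    have hye : y = X 1 := rfl
    have hze : z = X 2 := rfl
    have hwe : w = X 3 := rfl
    have hJe : J = Ideal.span {x * y, x * z, x * w, y * w,
        y ^ 2 - C (a - 1) * z * w - C (2 * a - 1) * z ^ 2,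
        C (2 * a - 1) * z * w + C (a - 1) * w ^ 2} := rfl
    set I : Ideal (MvPolynomial (Fin 4) k) := J ⊔ Ideal.span {x} with hI
    have hxI : x ∈ I := Ideal.mem_sup_right (Ideal.subset_span rfl)
    have hm4I : y * w ∈ I := Ideal.mem_sup_left m4
    have hm5I : y ^ 2 - C (a - 1) * z * w - C (2 * a - 1) * z ^ 2 ∈ I :=
      Ideal.mem_sup_left m5
    have hm6I : C (2 * a - 1) * z * w + C (a - 1) * w ^ 2 ∈ I :=
      Ideal.mem_sup_left m6
    -- the normal form map
    set σ : Polynomial k →+* MvPolynomial (Fin 4) k :=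
      (Polynomial.aeval z : Polynomial k →ₐ[k] MvPolynomial (Fin 4) k).toRingHom
      with hσ
    have hσC : ∀ r : k, σ (Polynomial.C r) = C r := by
      intro r; simp [hσ, algebraMap_eq]
    have hσX : σ Polynomial.X = z := by simp [hσ]
    -- normal form lemma
    have NF : ∀ f : MvPolynomial (Fin 4) k, ∃ p q s : Polynomial k,
        f - (σ p + σ q * y + σ s * w) ∈ I := by
      intro f
      induction f using MvPolynomial.induction_on with
      | C r =>
        exact ⟨Polynomial.C r, 0, 0, by simp [hσC]⟩
      | add f g hf hg =>
        obtain ⟨p, q, s, hf⟩ := hf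
        obtain ⟨p', q', s', hg⟩ := hg
        refine ⟨p + p', q + q', s + s', ?_⟩
        have e : f + g - (σ (p + p') + σ (q + q') * y + σ (s + s') * w) =
            (f - (σ p + σ q * y + σ s * w)) +
            (g - (σ p' + σ q' * y + σ s' * w)) := by
          simp only [map_add]; ring
        rw [e]; exact I.add_mem hf hg
      | mul_X f i hf =>
        obtain ⟨p, q, s, hf⟩ := hf
        fin_cases i
        · -- multiply by x
          show ∃ p q s : Polynomial k, f * X 0 - (σ p + σ q * y + σ s * w) ∈ I
          refine ⟨0, 0, 0, ?_⟩
          simpa using I.mul_mem_left f hxI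
        · -- multiply by y
          show ∃ p q s : Polynomial k, f * X 1 - (σ p + σ q * y + σ s * w) ∈ I
          refine ⟨Polynomial.C (2 * a - 1) * Polynomial.X ^ 2 * q, p,
            Polynomial.C (a - 1) * Polynomial.X * q, ?_⟩
          have e : f * X 1 -
              (σ (Polynomial.C (2 * a - 1) * Polynomial.X ^ 2 * q) + σ p * y +
                σ (Polynomial.C (a - 1) * Polynomial.X * q) * w) =
              (f - (σ p + σ q * y + σ s * w)) * y +
              σ q * (y ^ 2 - C (a - 1) * z * w - C (2 * a - 1) * z ^ 2) +
              σ s * (y * w) := by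
            simp only [map_mul, map_pow, hσC, hσX]
            show f * y - _ = _
            ring
          rw [e]
          exact I.add_mem (I.add_mem (I.mul_mem_right y hf)
            (I.mul_mem_left _ hm5I)) (I.mul_mem_left _ hm4I)
        · -- multiply by z
          show ∃ p q s : Polynomial k, f * X 2 - (σ p + σ q * y + σ s * w) ∈ I
          refine ⟨p * Polynomial.X, q * Polynomial.X, s * Polynomial.X, ?_⟩
          have e : f * X 2 -
              (σ (p * Polynomial.X) + σ (q * Polynomial.X) * y +
                σ (s * Polynomial.X) * w) =
              (f - (σ p + σ q * y + σ s * w)) * z := by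
            simp only [map_mul, hσX]
            show f * z - _ = _
            ring
          rw [e]; exact I.mul_mem_right z hf
        · -- multiply by w
          show ∃ p q s : Polynomial k, f * X 3 - (σ p + σ q * y + σ s * w) ∈ I
          refine ⟨0, 0, p + Polynomial.C (a - 2) * Polynomial.X * s, ?_⟩
          have e : f * X 3 -
              (σ 0 + σ 0 * y + σ (p + Polynomial.C (a - 2) * Polynomial.X * s) * w) =
              (f - (σ p + σ q * y + σ s * w)) * w +
              σ q * (y * w) +
              (-A * σ s) * (C (2 * a - 1) * z * w + C (a - 1) * w ^ 2) := by
            simp only [map_mul, map_add, map_zero, hσC, hσX]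
            show f * w - _ = _
            simp only [map_sub, map_mul, map_ofNat, map_one, ← hA]
            linear_combination (σ s * (w ^ 2 + 2 * z * w)) * hC
          rw [e]
          exact I.add_mem (I.add_mem (I.mul_mem_right w hf)
            (I.mul_mem_left _ hm4I)) (I.mul_mem_left _ hm6I)
    -- the two test homomorphisms
    have hC1 : (Polynomial.C a : Polynomial k) ^ 2 - Polynomial.C a + 1 = 0 := by
      have := congrArg (Polynomial.C : k →+* Polynomial k) ha
      simpa using this
    obtain ⟨η, hη⟩ : ∃ η' : MvPolynomial (Fin 4) k →+* Polynomial (Polynomial k),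
        η' = eval₂Hom (Polynomial.C.comp Polynomial.C)
          ![0, Polynomial.X, Polynomial.C Polynomial.X, 0] := ⟨_, rfl⟩
    obtain ⟨η₁, hη₁⟩ : ∃ η' : MvPolynomial (Fin 4) k →+* Polynomial k,
        η' = eval₂Hom Polynomial.C
          ![0, 0, Polynomial.X, Polynomial.C (a - 2) * Polynomial.X] := ⟨_, rfl⟩
    obtain ⟨g, hg⟩ : ∃ g' : Polynomial (Polynomial k),
        g' = Polynomial.X ^ 2 -
          Polynomial.C (Polynomial.C (2 * a - 1) * Polynomial.X ^ 2) := ⟨_, rfl⟩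
    have hηd : ∀ u ∈ I, g ∣ η u := by
      have hle : I ≤ Ideal.comap η (Ideal.span {g}) := by
        rw [hI, hJe]
        apply sup_le
        · rw [Ideal.span_le]
          intro u hu
          simp only [Set.mem_insert_iff, Set.mem_singleton_iff] at hu
          rcases hu with rfl | rfl | rfl | rfl | rfl | rfl <;>
            · rw [SetLike.mem_coe, Ideal.mem_comap, Ideal.mem_span_singleton]
              simp [hη, hg, hxe, hye, hze, hwe]
        · rw [Ideal.span_le]
          intro u hu
          simp only [Set.mem_singleton_iff] at hu
          subst hu
          rw [SetLike.mem_coe, Ideal.mem_comap, Ideal.mem_span_singleton]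
          simp [hη, hxe]
      intro u hu
      have := hle hu
      rwa [Ideal.mem_comap, Ideal.mem_span_singleton] at this
    have hη₁d : ∀ u ∈ I, η₁ u = 0 := by
      have hle : I ≤ Ideal.comap η₁ ⊥ := by
        rw [hI, hJe]
        apply sup_le
        · rw [Ideal.span_le]
          intro u hu
          simp only [Set.mem_insert_iff, Set.mem_singleton_iff] at hu
          rcases hu with rfl | rfl | rfl | rfl | rfl | rfl <;>
            · rw [SetLike.mem_coe, Ideal.mem_comap, Ideal.mem_bot]
              simp only [hη₁, hxe, hye, hze, hwe, map_sub, map_add, map_mul,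
                map_pow, map_ofNat, map_one, coe_eval₂Hom, eval₂_X, eval₂_C,
                Matrix.cons_val_zero, Matrix.cons_val_one, Matrix.head_cons,
                Matrix.cons_val_two, Matrix.cons_val_three, Matrix.tail_cons]
              first
                | ring1
                | linear_combination (-(Polynomial.X ^ 2) : Polynomial k) * hC1
                | linear_combination ((Polynomial.C a - 2) * Polynomial.X ^ 2 :
                    Polynomial k) * hC1
        · rw [Ideal.span_le]
          intro u hu
          simp only [Set.mem_singleton_iff] at hu
          subst hu
          rw [SetLike.mem_coe, Ideal.mem_comap, Ideal.mem_bot]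
          simp [hη₁, hxe]
      intro u hu
      have := hle hu
      rwa [Ideal.mem_comap, Ideal.mem_bot] at this
    -- evaluating the normal form
    have hησ : ∀ t : Polynomial k, η (σ t) = Polynomial.C t := by
      have : η.comp σ = (Polynomial.C : Polynomial k →+* Polynomial (Polynomial k)) := by
        apply Polynomial.ringHom_ext
        · intro r
          simp [hη, hσ, algebraMap_eq, hze]
        · simp [hη, hσ, hze]
      intro t
      have := congrArg (fun φ => φ t) this
      simpa using this
    have hη₁σ : ∀ t : Polynomial k, η₁ (σ t) = t := by
      have : η₁.comp σ = RingHom.id (Polynomial k) := by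
        apply Polynomial.ringHom_ext
        · intro r
          simp [hη₁, hσ, algebraMap_eq, hze]
        · simp [hη₁, hσ, hze]
      intro t
      have := congrArg (fun φ => φ t) this
      simpa using this
    -- the colon computation
    apply le_antisymm
    · -- hard direction
      intro f hf
      have hfzJ : f * z ∈ J := Ideal.mem_colon_span_singleton.1 hf
      have hfzI : f * z ∈ I := Ideal.mem_sup_left hfzJ
      obtain ⟨p, q, s, hnf⟩ := NF f
      have h1 : (σ p + σ q * y + σ s * w) * z ∈ I := by
        have h2 := I.sub_mem hfzI (I.mul_mem_right z hnf)
        have e : f * z - (f - (σ p + σ q * y + σ s * w)) * z =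
            (σ p + σ q * y + σ s * w) * z := by ring
        rwa [e] at h2
      -- use η to show p = q = 0
      have hval : η ((σ p + σ q * y + σ s * w) * z) =
          Polynomial.C (Polynomial.X * p) +
          Polynomial.C (Polynomial.X * q) * Polynomial.X := by
        rw [map_mul, map_add, map_add, map_mul, map_mul, hησ, hησ, hησ]
        have e1 : η y = Polynomial.X := by simp [hη, hye]
        have e2 : η z = Polynomial.C Polynomial.X := by simp [hη, hze]
        have e3 : η w = 0 := by simp [hη, hwe]
        rw [e1, e2, e3, map_mul, map_mul]
        ring
      have hd := hηd _ h1
      rw [hval] at hd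
      have hzero : (Polynomial.C (Polynomial.X * p) +
          Polynomial.C (Polynomial.X * q) * Polynomial.X :
          Polynomial (Polynomial k)) = 0 := by
        refine Polynomial.eq_zero_of_dvd_of_degree_lt hd ?_
        have hg2 : g.degree = 2 := by
          rw [hg]
          exact Polynomial.degree_X_pow_sub_C (by norm_num) _
        rw [hg2]
        refine lt_of_le_of_lt (Polynomial.degree_add_le _ _) (max_lt ?_ ?_)
        · exact lt_of_le_of_lt Polynomial.degree_C_le (by norm_num)
        · refine lt_of_le_of_lt (Polynomial.degree_mul_le _ _) ?_
          refine lt_of_le_of_lt (add_le_add Polynomial.degree_C_le le_rfl) ?_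
          rw [Polynomial.degree_X]
          norm_num
      have hp : p = 0 := by
        have h0 := congrArg (fun r => Polynomial.coeff r 0) hzero
        simp only [Polynomial.coeff_add, Polynomial.coeff_C_zero,
          Polynomial.coeff_C_mul, Polynomial.coeff_X_zero, mul_zero,
          Polynomial.coeff_zero, add_zero] at h0
        rcases mul_eq_zero.1 h0 with h | h
        · exact absurd h Polynomial.X_ne_zero
        · exact h
      have hq : q = 0 := by
        have h1' := congrArg (fun r => Polynomial.coeff r 1) hzero
        simp only [Polynomial.coeff_add, Polynomial.coeff_C_mul,
          Polynomial.coeff_X_one, mul_one, Polynomial.coeff_C,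
          Polynomial.coeff_zero, one_ne_zero, if_false, zero_add] at h1'
        rcases mul_eq_zero.1 h1' with h | h
        · exact absurd h Polynomial.X_ne_zero
        · exact h
      -- use η₁ to get s = 0
      have h0 := hη₁d _ h1
      have hval1 : η₁ ((σ p + σ q * y + σ s * w) * z) =
          (p + s * (Polynomial.C (a - 2) * Polynomial.X)) * Polynomial.X := by
        rw [map_mul, map_add, map_add, map_mul, map_mul, hη₁σ, hη₁σ, hη₁σ]
        have e1 : η₁ y = 0 := by simp [hη₁, hye]
        have e2 : η₁ z = Polynomial.X := by simp [hη₁, hze]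
        have e3 : η₁ w = Polynomial.C (a - 2) * Polynomial.X := by simp [hη₁, hwe]
        rw [e1, e2, e3]
        ring
      rw [hval1, hp] at h0
      have ha2 : a - 2 ≠ 0 := by
        intro h
        apply h3
        rw [sub_eq_zero] at h
        rw [h] at ha
        linear_combination ha
      have h0' : s * (Polynomial.C (a - 2) * Polynomial.X) * Polynomial.X = 0 := by
        rw [← h0]; ring
      have hs : s = 0 := by
        rcases mul_eq_zero.1 h0' with h | h
        · rcases mul_eq_zero.1 h with h' | h'
          · exact h'
          · rcases mul_eq_zero.1 h' with h'' | h''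
            · exact absurd (Polynomial.C_eq_zero.1 h'') ha2
            · exact absurd h'' Polynomial.X_ne_zero
        · exact absurd h Polynomial.X_ne_zero
      rw [hp, hq, hs] at hnf
      simpa using hnf
    · -- easy direction
      apply sup_le
      · intro u hu
        exact Ideal.mem_colon_span_singleton.2 (J.mul_mem_right z hu)
      · rw [Ideal.span_le]
        intro u hu
        simp only [Set.mem_singleton_iff] at hu
        subst hu
        exact Ideal.mem_colon_span_singleton.2
          (Ideal.subset_span (by simp))
end
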